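/- arXiv:0803.3294 — 5 statements merged into one kernel-verified Lean document; each statement's English description precedes it below -/
import Mathlib

section
/- Let G be an Abelian p-group of length at most N containing, for every r ∈ ℕ, a subgroup isomorphic to (Z/p^{k+1})^r, and such that G_{k+1} = p^{k+1}G is isomorphic to C_{k+1} for a fixed finite group. Then for every m there exist m elements of G of order p and height exactly k that are linearly independent over G_{k+1}; in particular the k-th Ulm invariant u_k(G) is infinite. -/
/-- Multiplication by `j` as an additive homomorphism. -/
def smulHom (G : Type*) [AddCommGroup G] (j : ℕ) : G →+ G where
  toFun x := j • x
  map_zero' := smul_zero j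
  map_add' x y := smul_add j x y

/-- The subgroup `jG` of an Abelian group `G`. -/
def smulSub (G : Type*) [AddCommGroup G] (j : ℕ) : AddSubgroup G :=
  (smulHom G j).range

/-- `P_j(G)`: the elements of order dividing `p` in `p^j G`. -/
def Psub (G : Type*) [AddCommGroup G] (p j : ℕ) : AddSubgroup G :=
  smulSub G (p ^ j) ⊓ (smulHom G p).ker

/-! The elements `p^k e_i` of a copy of `(ℤ/p^(k+1))^r` in `G` span an `r`-dimensional
`𝔽_p`-space `V` of elements of order `p` lying in `p^k G`. The vectors of `V` that land in the
finite group `p^(k+1) G` form a subspace `T` with `p ^ dim T ≤ |C|`, so for `r ≥ m + |C|` the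
quotient `V / T` has dimension at least `m`; lifts of `m` independent vectors of `V / T` are
independent modulo `p^(k+1) G`. -/

open Function Module

theorem Submodule.exists_linearMap_comap_eq_bot {K V : Type*} [DivisionRing K] [AddCommGroup V]
    [Module K V] [FiniteDimensional K V] (T : Submodule K V) {m : ℕ}
    (hm : m + finrank K T ≤ finrank K V) : ∃ g : (Fin m → K) →ₗ[K] V, T.comap g = ⊥ := by
  have hmQ : m ≤ finrank K (V ⧸ T) := by
    have := T.finrank_quotient_add_finrank
    omega
  set w := finBasis K (V ⧸ T) ∘ Fin.castLE hmQ
  have hw : LinearIndependent K w :=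
    (finBasis K (V ⧸ T)).linearIndependent.comp _ (Fin.castLE_injective hmQ)
  refine ⟨Fintype.linearCombination K (surjInv T.mkQ_surjective ∘ w),
    eq_bot_iff.mpr fun z hz => ?_⟩
  have hzero : ∑ i, z i • w i = 0 := by
    rw [← (Submodule.Quotient.mk_eq_zero T).mpr hz, ← Submodule.mkQ_apply,
      Fintype.linearCombination_apply]
    simp [surjInv_eq]
  exact funext (Fintype.linearIndependent_iff.mp hw z hzero)

section ZModCombinations

variable {p : ℕ} [NeZero p] {G : Type*} [AddCommGroup G]

theorem AddMonoidHom.map_zmod_smul {V : Type*} [AddCommGroup V] [Module (ZMod p) V]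
    (f : V →+ G) (a : ZMod p) (v : V) : f (a • v) = a.val • f v := by
  rw [← map_nsmul, ← Nat.cast_smul_eq_nsmul (ZMod p), ZMod.natCast_zmod_val]

theorem AddMonoidHom.apply_eq_sum_val_nsmul {m : ℕ} (f : (Fin m → ZMod p) →+ G)
    (z : Fin m → ZMod p) : f z = ∑ i, (z i).val • f (Pi.single i 1) := by
  conv_lhs => rw [pi_eq_sum_univ' z]
  simp only [map_sum, f.map_zmod_smul]

end ZModCombinations

theorem exists_addMonoidHom_comap_comp_eq_bot {p : ℕ} [Fact p.Prime] {G V : Type*} [AddCommGroup G]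
    [AddCommGroup V] [Module (ZMod p) V] [Module.Finite (ZMod p) V] {f : V →+ G}
    (hf : Injective f) (S : AddSubgroup G) [Finite S] {m : ℕ}
    (hm : m + Nat.card S ≤ finrank (ZMod p) V) :
    ∃ g : (Fin m → ZMod p) →+ V, S.comap (f.comp g) = ⊥ := by
  set T := AddSubgroup.toZModSubmodule p (S.comap f)
  have hcard : Nat.card T ≤ Nat.card S :=
    Nat.card_le_card_of_injective (fun v : T => (⟨f v, v.2⟩ : S))
      fun v w h => Subtype.ext (hf (congrArg Subtype.val h))
  have hT : finrank (ZMod p) T < Nat.card S := by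
    have := natCard_eq_pow_finrank (K := ZMod p) (V := T)
    rw [Nat.card_zmod] at this
    exact (Nat.lt_pow_self (Fact.out : p.Prime).one_lt).trans_le (this ▸ hcard)
  obtain ⟨g, hg⟩ := T.exists_linearMap_comap_eq_bot (m := m) (by omega)
  refine ⟨g.toAddMonoidHom, eq_bot_iff.mpr fun z hz => ?_⟩
  exact (Submodule.eq_bot_iff _).mp hg z hz

def zmodPowMulHom (p k : ℕ) : ZMod p →+ ZMod (p ^ (k + 1)) :=
  ZMod.lift p ⟨zmultiplesHom _ ((p : ZMod (p ^ (k + 1))) ^ k), by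
    rw [zmultiplesHom_apply, natCast_zsmul, nsmul_eq_mul, ← pow_succ', ← Nat.cast_pow,
      ZMod.natCast_self]⟩

theorem zmodPowMulHom_apply {p : ℕ} [NeZero p] (k : ℕ) (a : ZMod p) :
    zmodPowMulHom p k a = (p ^ k : ℕ) • (a.val : ZMod (p ^ (k + 1))) := by
  conv_lhs => rw [← ZMod.natCast_zmod_val a, ← Int.cast_natCast]
  rw [zmodPowMulHom, ZMod.lift_coe]
  simp [mul_comm]

theorem zmodPowMulHom_injective {p : ℕ} [NeZero p] (k : ℕ) : Injective (zmodPowMulHom p k) := by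
  refine (injective_iff_map_eq_zero _).mpr fun a ha => ?_
  rw [zmodPowMulHom_apply, nsmul_eq_mul, ← Nat.cast_mul, ZMod.natCast_eq_zero_iff, pow_succ] at ha
  have hdvd : p ∣ a.val := Nat.dvd_of_mul_dvd_mul_left (pow_pos (NeZero.pos p) k) ha
  exact (ZMod.val_eq_zero a).mp (Nat.eq_zero_of_dvd_of_lt hdvd (ZMod.val_lt a))

section Psub

variable {p : ℕ} [NeZero p] {G : Type*} [AddCommGroup G]

theorem exists_injective_psub_of_addEquiv {r k : ℕ} {H : AddSubgroup G}
    (φ : H ≃+ (Fin r → ZMod (p ^ (k + 1)))) :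
    ∃ f : (Fin r → ZMod p) →+ G, Injective f ∧ ∀ v, f v ∈ Psub G p k := by
  set f := H.subtype.comp (φ.symm.toAddMonoidHom.comp ((zmodPowMulHom p k).compLeft (Fin r)))
  refine ⟨f, Subtype.val_injective.comp (φ.symm.injective.comp
    (zmodPowMulHom_injective k).comp_left), fun v => ⟨?_, ?_⟩⟩
  · refine ⟨H.subtype (φ.symm fun j => ((v j).val : ZMod (p ^ (k + 1)))), ?_⟩
    change (p ^ k) • _ = H.subtype (φ.symm fun j => zmodPowMulHom p k (v j))
    rw [← map_nsmul, ← map_nsmul]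
    congr 2
    ext j
    simp [zmodPowMulHom_apply]
  · change p • f v = 0
    rw [← map_nsmul, show p • v = 0 by ext; simp, map_zero]

theorem exists_psub_comap_eq_bot [Fact p.Prime] {k : ℕ}
    (hsub : ∀ r : ℕ, ∃ H : AddSubgroup G, Nonempty (H ≃+ (Fin r → ZMod (p ^ (k + 1)))))
    (S : AddSubgroup G) [Finite S] (m : ℕ) :
    ∃ f : (Fin m → ZMod p) →+ G, (∀ z, f z ∈ Psub G p k) ∧ S.comap f = ⊥ := by
  obtain ⟨H, ⟨φ⟩⟩ := hsub (m + Nat.card S)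
  obtain ⟨e, he, hP⟩ := exists_injective_psub_of_addEquiv φ
  obtain ⟨g, hg⟩ := exists_addMonoidHom_comap_comp_eq_bot he S (m := m) (by rw [finrank_fin_fun])
  exact ⟨e.comp g, fun z => hP (g z), hg⟩

end Psub

theorem infinite_quotient_of_forall_exists_comap_eq_bot {R G : Type*} [Ring R] [Nontrivial R]
    [AddCommGroup G] {A B : AddSubgroup G}
    (h : ∀ m : ℕ, ∃ f : (Fin m → R) →+ G, (∀ z, f z ∈ A) ∧ B.comap f = ⊥) :
    Infinite (A ⧸ B.addSubgroupOf A) := by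
  refine not_finite_iff_infinite.mp fun hfin => ?_
  obtain ⟨f, hA, hB⟩ := h (Nat.card (A ⧸ B.addSubgroupOf A) + 1)
  have hinj : Injective fun i =>
      (QuotientAddGroup.mk ⟨f (Pi.single i 1), hA _⟩ : A ⧸ B.addSubgroupOf A) := by
    intro i j hij
    rw [QuotientAddGroup.eq, AddSubgroup.mem_addSubgroupOf] at hij
    have hmem : -Pi.single i 1 + Pi.single j 1 ∈ B.comap f := by simpa using hij
    rw [hB, AddSubgroup.mem_bot, neg_add_eq_zero] at hmem
    simpa [Pi.single_apply, eq_comm] using congrFun hmem i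
  simpa using Nat.card_le_card_of_injective _ hinj

theorem stmt2_general (p : ℕ) (hp : p.Prime) (k : ℕ)
    (G : Type*) [AddCommGroup G]
    (hsub : ∀ r : ℕ, ∃ H : AddSubgroup G,
      Nonempty (H ≃+ (Fin r → ZMod (p ^ (k + 1)))))
    (C : Type*) [AddCommGroup C] [Finite C]
    (hC : Nonempty (smulSub G (p ^ (k + 1)) ≃+ C)) :
    (∀ m : ℕ, ∃ b : Fin m → G,
      (∀ i, addOrderOf (b i) = p ∧ b i ∈ smulSub G (p ^ k) ∧
        b i ∉ smulSub G (p ^ (k + 1))) ∧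
      (∀ z : Fin m → ZMod p,
        (∑ i, (z i).val • b i) ∈ smulSub G (p ^ (k + 1)) → ∀ i, z i = 0)) ∧
    Infinite ((Psub G p k) ⧸ ((Psub G p (k + 1)).addSubgroupOf (Psub G p k))) := by
  have : Fact p.Prime := ⟨hp⟩
  have : Finite (smulSub G (p ^ (k + 1))) := .of_equiv C hC.some.symm.toEquiv
  have key := exists_psub_comap_eq_bot hsub (smulSub G (p ^ (k + 1)))
  refine ⟨fun m => ?_, infinite_quotient_of_forall_exists_comap_eq_bot (R := ZMod p) fun m => ?_⟩
  · obtain ⟨f, hP, hS⟩ := key m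
    have hindep : ∀ z, f z ∈ smulSub G (p ^ (k + 1)) → z = 0 := fun z hz =>
      (AddSubgroup.eq_bot_iff_forall _).mp hS z hz
    have hne : ∀ i : Fin m, (Pi.single i 1 : Fin m → ZMod p) ≠ 0 := fun i =>
      Pi.single_ne_zero_iff.mpr one_ne_zero
    refine ⟨fun i => f (Pi.single i 1), fun i => ⟨?_, (hP _).1, fun h => hne i (hindep _ h)⟩,
      fun z hz => congrFun (hindep z (f.apply_eq_sum_val_nsmul z ▸ hz))⟩
    exact addOrderOf_eq_prime (hP _).2 fun h : f (Pi.single i 1) = 0 =>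
      hne i (hindep _ (h ▸ zero_mem _))
  · obtain ⟨f, hP, hS⟩ := key m
    exact ⟨f, hP, eq_bot_iff.mpr ((AddSubgroup.comap_mono inf_le_left).trans hS.le)⟩

/-- Let `G` be an Abelian `p`-group of length at most `N` containing, for every
`r`, a subgroup isomorphic to `(ℤ/p^(k+1))^r`, and such that
`G_(k+1) = p^(k+1)G` is isomorphic to a fixed finite group. Then for every `m`
there are `m` elements of `G` of order `p` and height exactly `k` that are
linearly independent over `G_(k+1)`; in particular the `k`-th Ulm invariant
`u_k(G)` is infinite. -/
theorem stmt2 (p : ℕ) (hp : p.Prime) (N k : ℕ) (hkN : k < N)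
    (G : Type*) [AddCommGroup G]
    (hlen : ∀ x : G, (p ^ N) • x = 0)
    (hsub : ∀ r : ℕ, ∃ H : AddSubgroup G,
      Nonempty (H ≃+ (Fin r → ZMod (p ^ (k + 1)))))
    (C : Type*) [AddCommGroup C] [Finite C]
    (hC : Nonempty (smulSub G (p ^ (k + 1)) ≃+ C)) :
    (∀ m : ℕ, ∃ b : Fin m → G,
      (∀ i, addOrderOf (b i) = p ∧ b i ∈ smulSub G (p ^ k) ∧
        b i ∉ smulSub G (p ^ (k + 1))) ∧
      (∀ z : Fin m → ZMod p,
        (∑ i, (z i).val • b i) ∈ smulSub G (p ^ (k + 1)) → ∀ i, z i = 0)) ∧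
    Infinite ((Psub G p k) ⧸ ((Psub G p (k + 1)).addSubgroupOf (Psub G p k))) :=
  stmt2_general p hp k G hsub C hC
end

section
/- Let S be a Π⁰₂ subset of ℕ, given with a computable approximation S_s such that n ∈ S iff n ∈ S_s for infinitely many s. Then there is a uniformly computable sequence of Q-vector spaces (A_n) with dim(A_n) = 1 if n ∈ S and dim(A_n) = 2 if n ∉ S. -/
/-- The lightface arithmetical hierarchy on subsets of ℕ: `SigmaN n` is Σ⁰ₙ. -/
def SigmaN : ℕ → (ℕ → Prop) → Prop
  | 0, S => ComputablePred S
  | n + 1, S => ∃ R : ℕ → Prop, SigmaN n R ∧ ∀ x, S x ↔ ∃ y, ¬ R (Nat.pair x y)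

/-- `PiN n` is Π⁰ₙ. -/
def PiN (n : ℕ) (S : ℕ → Prop) : Prop := SigmaN n fun x => ¬ S x

/-- `DeltaN n` is Δ⁰ₙ. -/
def DeltaN (n : ℕ) (S : ℕ → Prop) : Prop := SigmaN n S ∧ PiN n S

/-- `DSigmaN n` is the class of differences of two Σ⁰ₙ sets. -/
def DSigmaN (n : ℕ) (S : ℕ → Prop) : Prop :=
  ∃ S₁ S₂ : ℕ → Prop, SigmaN n S₁ ∧ SigmaN n S₂ ∧ ∀ x, S x ↔ S₁ x ∧ ¬ S₂ x

/-- Evaluation of the `e`-th partial computable function. -/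
def codeEval (e : ℕ) : ℕ →. ℕ :=
  (Denumerable.ofNat Nat.Partrec.Code e).eval

/-- A fixed computable surjection from ℕ onto ℚ, used to code scalars. -/
def ratOf (n : ℕ) : ℚ :=
  ((n.unpair.1.unpair.1 : ℚ) - (n.unpair.1.unpair.2 : ℚ)) / (n.unpair.2 : ℚ)

/-- `(add, smul, zero)` is a presentation of a ℚ-vector space on the universe ℕ,
with scalars coded by `ratOf`. -/
def IsVecPres (add smul : ℕ → ℕ → ℕ) (zero : ℕ) : Prop :=
  (∀ x y, add x y = add y x) ∧
  (∀ x y z, add (add x y) z = add x (add y z)) ∧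
  (∀ x, add zero x = x) ∧
  (∀ x, ∃ y, add x y = zero) ∧
  (∀ a b x, ratOf a = ratOf b → smul a x = smul b x) ∧
  (∀ a x, ratOf a = 1 → smul a x = x) ∧
  (∀ a x, ratOf a = 0 → smul a x = zero) ∧
  (∀ a x y, smul a (add x y) = add (smul a x) (smul a y)) ∧
  (∀ a b c x, ratOf c = ratOf a + ratOf b →
    smul c x = add (smul a x) (smul b x)) ∧
  (∀ a b c x, ratOf c = ratOf a * ratOf b → smul c x = smul a (smul b x))

/-- The linear combination `z₁ • b₁ + ⋯ + z_d • b_d` in a presentation. -/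
def lcomb (add smul : ℕ → ℕ → ℕ) (zero : ℕ) {d : ℕ}
    (z b : Fin d → ℕ) : ℕ :=
  (List.ofFn fun i => smul (z i) (b i)).foldr add zero

/-- The tuple `b` is linearly independent in the presentation. -/
def Indep (add smul : ℕ → ℕ → ℕ) (zero : ℕ) {d : ℕ} (b : Fin d → ℕ) : Prop :=
  ∀ z : Fin d → ℕ, lcomb add smul zero z b = zero → ∀ i, ratOf (z i) = 0

/-- The tuple `b` spans the presentation. -/
def Spans (add smul : ℕ → ℕ → ℕ) (zero : ℕ) {d : ℕ} (b : Fin d → ℕ) : Prop :=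
  ∀ x : ℕ, ∃ z : Fin d → ℕ, lcomb add smul zero z b = x

/-- The presented vector space has dimension `d`. -/
def DimEq (add smul : ℕ → ℕ → ℕ) (zero : ℕ) (d : ℕ) : Prop :=
  ∃ b : Fin d → ℕ, Indep add smul zero b ∧ Spans add smul zero b

/-- The presented vector space has infinite dimension. -/
def DimInf (add smul : ℕ → ℕ → ℕ) (zero : ℕ) : Prop :=
  ∀ d : ℕ, ∃ b : Fin d → ℕ, Indep add smul zero b

/-- The atomic diagram of a vector space presentation, coded as a set of
natural numbers. -/
def VDiag (add smul : ℕ → ℕ → ℕ) (zero : ℕ) (m : ℕ) : Prop :=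
  (∃ x y, m = Nat.pair 0 (Nat.pair (Nat.pair x y) (add x y))) ∨
  (∃ a x, m = Nat.pair 1 (Nat.pair (Nat.pair a x) (smul a x))) ∨
  m = Nat.pair 2 zero

/-- `e` is an index for (the characteristic function of the atomic diagram of)
the presentation `(add, smul, zero)`. -/
def IsVIndex (e : ℕ) (add smul : ℕ → ℕ → ℕ) (zero : ℕ) : Prop :=
  ∀ m, (VDiag add smul zero m → codeEval e m = Part.some 1) ∧
    (¬ VDiag add smul zero m → codeEval e m = Part.some 0)

/-- The index set of the class of computable ℚ-vector spaces. -/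
def IVS (e : ℕ) : Prop :=
  ∃ add smul zero, IsVecPres add smul zero ∧ IsVIndex e add smul zero

/-- `I` is m-complete `Γ` within `IK`: `I` is the intersection of a `Γ` set
with `IK`, and every `Γ` set m-reduces to `I` via a computable function whose
values lie in `IK`. -/
def MCompleteWithin (Γ : (ℕ → Prop) → Prop) (I IK : ℕ → Prop) : Prop :=
  (∃ R : ℕ → Prop, Γ R ∧ ∀ e, I e ↔ R e ∧ IK e) ∧
  ∀ S : ℕ → Prop, Γ S → ∃ f : ℕ → ℕ, Computable f ∧
    (∀ n, IK (f n)) ∧ ∀ n, S n ↔ I (f n)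

/-!
At stage `s` the element `i` of `A n` is the `i`-th entry of a finite list of distinct vectors
of `ℚ²`. Each stage answers one request (a sum of two entries, a scalar multiple of an entry,
or a prescribed vector of `ℚ²`) by adding the answer to the list, and whenever `Sa n s` holds it
maps the whole list by a projection of `ℚ²` onto the line `ℚ × {0}` that is injective on the
list. Every change is linear, so an equation `x + y = z` or `a • x = z` recorded at one stage
survives all later ones, and the operations are computable. If `n ∈ S` there are infinitely
many projections, so every entry ends up on the line, where projections act trivially, and the
limit is `ℚ`. Otherwise the list is eventually left alone while every vector of `ℚ²` is
requested, and the limit is `ℚ²`.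
-/

namespace Pi2VectorSpaces

open Filter Primrec

section RatCode

def numPos (c : ℕ) : ℕ := c.unpair.1.unpair.1
def numNeg (c : ℕ) : ℕ := c.unpair.1.unpair.2
def den (c : ℕ) : ℕ := c.unpair.2

theorem ratOf_eq_div (c : ℕ) : ratOf c = ((numPos c : ℚ) - numNeg c) / den c := rfl

@[simp] theorem ratOf_pair (p q d : ℕ) :
    ratOf (Nat.pair (Nat.pair p q) d) = ((p : ℚ) - q) / d := by
  simp [ratOf]

theorem ratOf_zero : ratOf 0 = 0 := by
  simp [ratOf]

theorem abs_ratOf_le (c : ℕ) : |ratOf c| ≤ c := by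
  have hp : numPos c ≤ c := (Nat.unpair_left_le _).trans (Nat.unpair_left_le c)
  have hq : numNeg c ≤ c := (Nat.unpair_right_le _).trans (Nat.unpair_left_le c)
  have hpq : |(numPos c : ℚ) - numNeg c| ≤ c := abs_sub_le_iff.2
    ⟨by linarith [(Nat.cast_le (α := ℚ)).2 hp], by linarith [(Nat.cast_le (α := ℚ)).2 hq]⟩
  rw [ratOf_eq_div, abs_div, Nat.abs_cast]
  rcases Nat.eq_zero_or_pos (den c) with h | h
  · simp [h]
  · exact (div_le_self (abs_nonneg _) (by exact_mod_cast h)).trans hpq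

theorem ratOf_surjective : Function.Surjective ratOf := fun q => by
  refine ⟨Nat.pair (Nat.pair q.num.toNat (-q.num).toNat) q.den, ?_⟩
  have h : ((q.num.toNat : ℤ) : ℚ) - (((-q.num).toNat : ℤ) : ℚ) = q.num := by
    exact_mod_cast Int.toNat_sub_toNat_neg q.num
  rw [ratOf_pair]
  push_cast at h
  rw [h, Rat.num_div_den]

/-- A code of denominator `0` stands for `0`, since `x / 0 = 0`; this rewrites it as `0 / 1`. -/
def normCode (c : ℕ) : ℕ := if den c = 0 then Nat.pair (Nat.pair 0 0) 1 else c

theorem ratOf_normCode (c : ℕ) : ratOf (normCode c) = ratOf c := by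
  unfold normCode
  split_ifs with h
  · simp [ratOf_eq_div c, h]
  · rfl

theorem den_normCode_pos (c : ℕ) : 0 < den (normCode c) := by
  unfold normCode
  split_ifs with h
  · simp [den]
  · exact Nat.pos_of_ne_zero h

def addCode (a b : ℕ) : ℕ :=
  let a := normCode a
  let b := normCode b
  Nat.pair (Nat.pair (numPos a * den b + numPos b * den a) (numNeg a * den b + numNeg b * den a))
    (den a * den b)

def mulCode (a b : ℕ) : ℕ :=
  let a := normCode a
  let b := normCode b
  Nat.pair (Nat.pair (numPos a * numPos b + numNeg a * numNeg b)
    (numPos a * numNeg b + numNeg a * numPos b)) (den a * den b)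

def natCode (k : ℕ) : ℕ := Nat.pair (Nat.pair k 0) 1

theorem ratOf_addCode (a b : ℕ) : ratOf (addCode a b) = ratOf a + ratOf b := by
  have ha : (den (normCode a) : ℚ) ≠ 0 := by exact_mod_cast (den_normCode_pos a).ne'
  have hb : (den (normCode b) : ℚ) ≠ 0 := by exact_mod_cast (den_normCode_pos b).ne'
  rw [← ratOf_normCode a, ← ratOf_normCode b, addCode, ratOf_pair, ratOf_eq_div, ratOf_eq_div]
  field_simp
  push_cast
  ring

theorem ratOf_mulCode (a b : ℕ) : ratOf (mulCode a b) = ratOf a * ratOf b := by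
  have ha : (den (normCode a) : ℚ) ≠ 0 := by exact_mod_cast (den_normCode_pos a).ne'
  have hb : (den (normCode b) : ℚ) ≠ 0 := by exact_mod_cast (den_normCode_pos b).ne'
  rw [← ratOf_normCode a, ← ratOf_normCode b, mulCode, ratOf_pair, ratOf_eq_div, ratOf_eq_div]
  field_simp
  push_cast
  ring

@[simp] theorem ratOf_natCode (k : ℕ) : ratOf (natCode k) = k := by
  simp [natCode]

theorem ratOf_eq_ratOf_iff (a b : ℕ) : ratOf a = ratOf b ↔
    numPos (normCode a) * den (normCode b) + numNeg (normCode b) * den (normCode a) =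
      numNeg (normCode a) * den (normCode b) + numPos (normCode b) * den (normCode a) := by
  have ha : (den (normCode a) : ℚ) ≠ 0 := by exact_mod_cast (den_normCode_pos a).ne'
  have hb : (den (normCode b) : ℚ) ≠ 0 := by exact_mod_cast (den_normCode_pos b).ne'
  rw [← ratOf_normCode a, ← ratOf_normCode b, ratOf_eq_div, ratOf_eq_div, div_eq_div_iff ha hb]
  qify
  constructor <;> intro h <;> linarith

theorem primrec_unpair_fst : Primrec fun v : ℕ => v.unpair.1 := fst.comp unpair

theorem primrec_unpair_snd : Primrec fun v : ℕ => v.unpair.2 := snd.comp unpair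

theorem primrec_numPos : Primrec numPos := primrec_unpair_fst.comp primrec_unpair_fst
theorem primrec_numNeg : Primrec numNeg := primrec_unpair_snd.comp primrec_unpair_fst
theorem primrec_den : Primrec den := primrec_unpair_snd

theorem primrec_normCode : Primrec normCode :=
  Primrec.ite (Primrec.eq.comp primrec_den (const 0)) (const _) Primrec.id

theorem primrec₂_addCode : Primrec₂ addCode := by
  have ha := primrec_normCode.comp (fst (α := ℕ) (β := ℕ))
  have hb := primrec_normCode.comp (snd (α := ℕ) (β := ℕ))
  exact Primrec₂.natPair.comp
    (Primrec₂.natPair.comp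
      (nat_add.comp (nat_mul.comp (primrec_numPos.comp ha) (primrec_den.comp hb))
        (nat_mul.comp (primrec_numPos.comp hb) (primrec_den.comp ha)))
      (nat_add.comp (nat_mul.comp (primrec_numNeg.comp ha) (primrec_den.comp hb))
        (nat_mul.comp (primrec_numNeg.comp hb) (primrec_den.comp ha))))
    (nat_mul.comp (primrec_den.comp ha) (primrec_den.comp hb))

theorem primrec₂_mulCode : Primrec₂ mulCode := by
  have ha := primrec_normCode.comp (fst (α := ℕ) (β := ℕ))
  have hb := primrec_normCode.comp (snd (α := ℕ) (β := ℕ))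
  exact Primrec₂.natPair.comp
    (Primrec₂.natPair.comp
      (nat_add.comp (nat_mul.comp (primrec_numPos.comp ha) (primrec_numPos.comp hb))
        (nat_mul.comp (primrec_numNeg.comp ha) (primrec_numNeg.comp hb)))
      (nat_add.comp (nat_mul.comp (primrec_numPos.comp ha) (primrec_numNeg.comp hb))
        (nat_mul.comp (primrec_numNeg.comp ha) (primrec_numPos.comp hb))))
    (nat_mul.comp (primrec_den.comp ha) (primrec_den.comp hb))

theorem primrec_natCode : Primrec natCode :=
  Primrec₂.natPair.comp (Primrec₂.natPair.comp Primrec.id (const 0)) (const 1)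

theorem primrecRel_ratOf_eq : PrimrecRel fun a b : ℕ => ratOf a = ratOf b := by
  have ha := primrec_normCode.comp (fst (α := ℕ) (β := ℕ))
  have hb := primrec_normCode.comp (snd (α := ℕ) (β := ℕ))
  refine (Primrec.eq.comp
    (nat_add.comp (nat_mul.comp (primrec_numPos.comp ha) (primrec_den.comp hb))
      (nat_mul.comp (primrec_numNeg.comp hb) (primrec_den.comp ha)))
    (nat_add.comp (nat_mul.comp (primrec_numNeg.comp ha) (primrec_den.comp hb))
      (nat_mul.comp (primrec_numPos.comp hb) (primrec_den.comp ha)))).of_eq ?_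
  exact fun p => (ratOf_eq_ratOf_iff p.1 p.2).symm

end RatCode

section LeastCode

variable {X : Type*} [DecidableEq X] (f : ℕ → X)

/-- The fixed points of `leastCode f` are canonical codes, one for each value of `f`. -/
def leastCode (a : ℕ) : ℕ := Nat.find (⟨a, rfl⟩ : ∃ k, f k = f a)

theorem apply_leastCode (a : ℕ) : f (leastCode f a) = f a :=
  Nat.find_spec (⟨a, rfl⟩ : ∃ k, f k = f a)

theorem leastCode_le (a : ℕ) : leastCode f a ≤ a := Nat.find_min' _ rfl

theorem leastCode_congr {a b : ℕ} (h : f a = f b) : leastCode f a = leastCode f b := by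
  simp only [leastCode, h]

theorem leastCode_leastCode (a : ℕ) : leastCode f (leastCode f a) = leastCode f a :=
  leastCode_congr f (apply_leastCode f a)

theorem eq_of_leastCode_eq_self {a b : ℕ} (ha : leastCode f a = a) (hb : leastCode f b = b)
    (h : f a = f b) : a = b := by
  rw [← ha, ← hb, leastCode_congr f h]

theorem primrec_leastCode (hf : PrimrecRel fun a b => f a = f b) : Primrec (leastCode f) := by
  refine Primrec.of_graph ⟨id, Primrec.id, leastCode_le f⟩ ?_
  have hmin : PrimrecRel fun a c => ∀ k < c, ¬ f k = f a :=
    (PrimrecRel.forall_lt (R := fun k a => ¬ f k = f a) hf.not).comp snd fst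
  exact ((hf.comp snd fst).and hmin).of_eq fun p => by simp only [leastCode, Nat.find_eq_iff]

end LeastCode

section Presentation

variable {V W : Type*} [AddCommGroup V] [Module ℚ V] [AddCommGroup W] [Module ℚ W]

structure IsPresHom (add smul : ℕ → ℕ → ℕ) (zero : ℕ) (f : ℕ → V) : Prop where
  map_add : ∀ x y, f (add x y) = f x + f y
  map_smul : ∀ a x, f (smul a x) = ratOf a • f x
  map_zero : f zero = 0

variable {add smul : ℕ → ℕ → ℕ} {zero : ℕ} {f : ℕ → V}

theorem IsPresHom.comp (hf : IsPresHom add smul zero f) (g : V →ₗ[ℚ] W) :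
    IsPresHom add smul zero (g ∘ f) where
  map_add x y := by simp [hf.map_add]
  map_smul a x := by simp [hf.map_smul]
  map_zero := by simp [hf.map_zero]

theorem IsPresHom.isVecPres (hf : IsPresHom add smul zero f) (hinj : Function.Injective f) :
    IsVecPres add smul zero := by
  have hneg : ratOf (Nat.pair (Nat.pair 0 1) 1) = -1 := by norm_num [ratOf_pair]
  refine ⟨fun x y => hinj ?_, fun x y z => hinj ?_, fun x => hinj ?_,
    fun x => ⟨smul (Nat.pair (Nat.pair 0 1) 1) x, hinj ?_⟩, fun a b x h => hinj ?_,
    fun a x h => hinj ?_, fun a x h => hinj ?_, fun a x y => hinj ?_,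
    fun a b c x h => hinj ?_, fun a b c x h => hinj ?_⟩ <;>
  simp only [hf.map_add, hf.map_smul, hf.map_zero, hneg]
  · exact add_comm _ _
  · exact add_assoc _ _ _
  · exact zero_add _
  · rw [neg_one_smul, add_neg_cancel]
  · rw [h]
  · rw [h, one_smul]
  · rw [h, zero_smul]
  · exact smul_add _ _ _
  · rw [h, add_smul]
  · rw [h, mul_smul]

theorem IsPresHom.apply_lcomb (hf : IsPresHom add smul zero f) {d : ℕ} (z c : Fin d → ℕ) :
    f (lcomb add smul zero z c) = ∑ i, ratOf (z i) • f (c i) := by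
  have hfold : ∀ l : List ℕ, f (l.foldr add zero) = (l.map f).sum := fun l => by
    induction l with
    | nil => exact hf.map_zero
    | cons x l ih => rw [List.foldr_cons, hf.map_add, ih, List.map_cons, List.sum_cons]
  rw [lcomb, hfold, List.map_ofFn, List.sum_ofFn]
  simp [hf.map_smul]

theorem IsPresHom.dimEq (hf : IsPresHom add smul zero f) (hbij : Function.Bijective f) {d : ℕ}
    (B : Module.Basis (Fin d) ℚ V) : DimEq add smul zero d := by
  choose c hc using fun i => hbij.2 (B i)
  refine ⟨c, fun z hz i => ?_, fun x => ?_⟩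
  · have h := congrArg f hz
    rw [hf.apply_lcomb, hf.map_zero] at h
    simp only [hc] at h
    exact Fintype.linearIndependent_iff.1 B.linearIndependent _ h i
  · choose z hz using fun i => ratOf_surjective (B.repr (f x) i)
    refine ⟨z, hbij.1 ?_⟩
    rw [hf.apply_lcomb]
    simp only [hc, hz]
    exact B.sum_repr (f x)

end Presentation

section VecCode

def vecOf (v : ℕ) : ℚ × ℚ := (ratOf v.unpair.1, ratOf v.unpair.2)

def vecCanon : ℕ → ℕ := leastCode vecOf

def vecAdd (v w : ℕ) : ℕ :=
  vecCanon (Nat.pair (addCode v.unpair.1 w.unpair.1) (addCode v.unpair.2 w.unpair.2))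

def vecSmul (a v : ℕ) : ℕ := vecCanon (Nat.pair (mulCode a v.unpair.1) (mulCode a v.unpair.2))

def vecCollapse (k v : ℕ) : ℕ :=
  vecCanon (Nat.pair (addCode v.unpair.1 (mulCode (natCode k) v.unpair.2)) 0)

/-- Fresh since `|ratOf c| ≤ c`: its first coordinate exceeds that of every entry of `L`. -/
def freshVec (L : List ℕ) : ℕ := vecCanon (Nat.pair (natCode (L.sum + 1)) 0)

@[simp] theorem vecOf_pair (a b : ℕ) : vecOf (Nat.pair a b) = (ratOf a, ratOf b) := by
  simp [vecOf]

@[simp] theorem vecOf_zero : vecOf 0 = 0 := by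
  simp [vecOf, ratOf_zero]

@[simp] theorem vecOf_vecCanon (v : ℕ) : vecOf (vecCanon v) = vecOf v := apply_leastCode _ v

theorem vecCanon_vecCanon (v : ℕ) : vecCanon (vecCanon v) = vecCanon v := leastCode_leastCode _ v

theorem vecCanon_zero : vecCanon 0 = 0 := Nat.le_zero.1 (leastCode_le _ 0)

theorem eq_of_vecOf_eq {v w : ℕ} (hv : vecCanon v = v) (hw : vecCanon w = w)
    (h : vecOf v = vecOf w) : v = w :=
  eq_of_leastCode_eq_self _ hv hw h

def IsCanonList (L : List ℕ) : Prop := L.Nodup ∧ ∀ v ∈ L, vecCanon v = v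

theorem vecOf_surjective (p : ℚ × ℚ) : ∃ v, vecCanon v = v ∧ vecOf v = p := by
  obtain ⟨a, ha⟩ := ratOf_surjective p.1
  obtain ⟨b, hb⟩ := ratOf_surjective p.2
  exact ⟨vecCanon (Nat.pair a b), vecCanon_vecCanon _, by simp [ha, hb]⟩

theorem vecOf_vecAdd (v w : ℕ) : vecOf (vecAdd v w) = vecOf v + vecOf w := by
  rw [vecAdd, vecOf_vecCanon, vecOf_pair, ratOf_addCode, ratOf_addCode]
  rfl

theorem vecOf_vecSmul (a v : ℕ) : vecOf (vecSmul a v) = ratOf a • vecOf v := by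
  rw [vecSmul, vecOf_vecCanon, vecOf_pair, ratOf_mulCode, ratOf_mulCode]
  rfl

theorem vecOf_freshVec_ne {L : List ℕ} {v : ℕ} (hv : v ∈ L) : vecOf (freshVec L) ≠ vecOf v := by
  intro h
  rw [freshVec, vecOf_vecCanon, vecOf_pair, ratOf_natCode] at h
  have hle : |ratOf v.unpair.1| ≤ L.sum :=
    (abs_ratOf_le _).trans (by exact_mod_cast (Nat.unpair_left_le v).trans (List.le_sum_of_mem hv))
  rw [show ratOf v.unpair.1 = _ from (congrArg Prod.fst h).symm, abs_of_nonneg (by positivity)] at hle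
  push_cast at hle
  linarith

theorem freshVec_not_mem (L : List ℕ) : freshVec L ∉ L :=
  fun h => vecOf_freshVec_ne h rfl

end VecCode

section Collapse

/-- The projection of `ℚ²` onto the line `ℚ × {0}` along the direction `(-k, 1)`. -/
def collapse (k : ℚ) : ℚ × ℚ →ₗ[ℚ] ℚ × ℚ :=
  (LinearMap.fst ℚ ℚ ℚ + k • LinearMap.snd ℚ ℚ ℚ).prod 0

theorem collapse_apply (k : ℚ) (p : ℚ × ℚ) : collapse k p = (p.1 + k * p.2, 0) := rfl

theorem collapse_of_snd_eq_zero (k : ℚ) {p : ℚ × ℚ} (hp : p.2 = 0) : collapse k p = p := by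
  rw [collapse_apply, hp, mul_zero, add_zero]
  exact Prod.ext rfl hp.symm

theorem eq_of_collapse_eq {k k' : ℚ} {p q : ℚ × ℚ} (hk : k ≠ k')
    (h : collapse k p = collapse k q) (h' : collapse k' p = collapse k' q) : p = q := by
  simp only [collapse_apply, Prod.mk.injEq, and_true] at h h'
  have h2 : p.2 = q.2 := by
    have : (k - k') * (p.2 - q.2) = 0 := by linear_combination h - h'
    exact sub_eq_zero.1 ((mul_eq_zero.1 this).resolve_left (sub_ne_zero.2 hk))
  exact Prod.ext (by rw [h2] at h; linarith) h2

/-- Each pair of distinct points is identified by at most one collapse, so among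
`|s|² + 1` candidates some collapse is injective on `s`. -/
theorem exists_le_injOn_collapse (s : Finset (ℚ × ℚ)) :
    ∃ k : ℕ, k ≤ s.card ^ 2 ∧ Set.InjOn (collapse k) s := by
  by_contra! hbad
  have hpair : ∀ k ∈ Finset.range (s.card ^ 2 + 1), ∃ pq ∈ s.offDiag,
      collapse k pq.1 = collapse k pq.2 := by
    intro k hk
    have hk := hbad k (by simpa [Nat.lt_succ_iff] using hk)
    simp only [Set.InjOn, not_forall, exists_prop, Finset.mem_coe] at hk
    obtain ⟨p, hp, q, hq, hpq, hne⟩ := hk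
    exact ⟨(p, q), Finset.mem_offDiag.2 ⟨hp, hq, hne⟩, hpq⟩
  choose! f hfs hf using hpair
  have hcard : (s.offDiag).card < (Finset.range (s.card ^ 2 + 1)).card := by
    rw [Finset.offDiag_card, Finset.card_range]
    exact Nat.lt_succ_of_le (Nat.sub_le _ _ |>.trans (by rw [sq]))
  obtain ⟨k, hk, k', hk', hkk', hfk⟩ := Finset.exists_ne_map_eq_of_card_lt_of_maps_to hcard hfs
  have hne := (Finset.mem_offDiag.1 (hfs k hk)).2.2
  exact hne (eq_of_collapse_eq (by exact_mod_cast hkk') (hf k hk) (hfk ▸ hf k' hk'))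

theorem vecOf_vecCollapse (k v : ℕ) : vecOf (vecCollapse k v) = collapse k (vecOf v) := by
  rw [vecCollapse, vecOf_vecCanon, vecOf_pair, ratOf_addCode, ratOf_mulCode, ratOf_natCode,
    ratOf_zero, collapse_apply]
  rfl

theorem vecCollapse_of_snd_eq_zero (k : ℕ) {v : ℕ} (hv : vecCanon v = v) (h : (vecOf v).2 = 0) :
    vecCollapse k v = v := by
  refine eq_of_vecOf_eq (vecCanon_vecCanon _) hv ?_
  rw [vecOf_vecCollapse, collapse_of_snd_eq_zero _ h]

/-- When `IsCanonList L`, some `k ≤ |L|²` works by `exists_le_injOn_collapse`. -/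
def goodCollapse (L : List ℕ) : ℕ :=
  Nat.findGreatest (fun k => (L.map (vecCollapse k)).Nodup) (L.length ^ 2)

def collapseList (L : List ℕ) : List ℕ := L.map (vecCollapse (goodCollapse L))

theorem nodup_collapseList {L : List ℕ} (hL : IsCanonList L) : (collapseList L).Nodup := by
  obtain ⟨k, hk, hinj⟩ := exists_le_injOn_collapse (L.map vecOf).toFinset
  have hkL : k ≤ L.length ^ 2 :=
    hk.trans (Nat.pow_le_pow_left ((List.toFinset_card_le _).trans (List.length_map _).le) 2)
  refine Nat.findGreatest_spec (P := fun k => (L.map (vecCollapse k)).Nodup) hkL ?_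
  refine hL.1.map_on fun v hv w hw hvw => eq_of_vecOf_eq (hL.2 v hv) (hL.2 w hw) (hinj ?_ ?_ ?_)
  · simpa using ⟨v, hv, rfl⟩
  · simpa using ⟨w, hw, rfl⟩
  · simpa only [vecOf_vecCollapse] using congrArg vecOf hvw

end Collapse

section Construction

theorem getD_mem {α : Type*} {L : List α} {i : ℕ} {d : α} (hi : i < L.length) :
    L.getD i d ∈ L := by
  rw [List.getD_eq_getElem _ _ hi]
  exact List.getElem_mem hi

def appendNew (v : ℕ) (L : List ℕ) : List ℕ := if v ∈ L then L else L ++ [v]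

theorem getD_appendNew_of_lt {v i : ℕ} {L : List ℕ} (hi : i < L.length) :
    (appendNew v L).getD i 0 = L.getD i 0 := by
  unfold appendNew
  split_ifs
  · rfl
  · exact List.getD_append _ _ _ _ hi

theorem idxOf_lt_length_appendNew (v : ℕ) (L : List ℕ) : L.idxOf v < (appendNew v L).length := by
  unfold appendNew
  split_ifs with h
  · exact List.idxOf_lt_length_iff.2 h
  · simp [List.idxOf_eq_length_iff.2 h]

theorem getD_appendNew_idxOf (v : ℕ) (L : List ℕ) : (appendNew v L).getD (L.idxOf v) 0 = v := by
  unfold appendNew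
  split_ifs with h
  · rw [List.getD_eq_getElem _ _ (List.idxOf_lt_length_iff.2 h), List.getElem_idxOf]
  · simp [List.idxOf_eq_length_iff.2 h]

theorem length_le_length_appendNew (v : ℕ) (L : List ℕ) : L.length ≤ (appendNew v L).length := by
  unfold appendNew
  split_ifs <;> simp

theorem mem_appendNew {v w : ℕ} {L : List ℕ} : w ∈ appendNew v L ↔ w = v ∨ w ∈ L := by
  unfold appendNew
  split_ifs with h
  · exact ⟨Or.inr, fun hw => hw.elim (· ▸ h) id⟩
  · simp [or_comm]

theorem nodup_appendNew (v : ℕ) {L : List ℕ} (hL : L.Nodup) : (appendNew v L).Nodup := by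
  unfold appendNew
  split_ifs with h
  · exact hL
  · exact hL.append (List.nodup_singleton v) (by simpa using h)

/-- The element requested at stage `⟨⟨m, u⟩, r⟩`: a sum of two entries (`m = 0`), a scalar
multiple of an entry (`m = 1`) or the vector coded by `u`; the component `r` only delays the
request until `L` is long enough. -/
def request (s : ℕ) (L : List ℕ) : ℕ :=
  let m := s.unpair.1.unpair.1
  let u := s.unpair.1.unpair.2
  if m = 0 then vecAdd (L.getD u.unpair.1 0) (L.getD u.unpair.2 0)
  else if m = 1 then vecSmul u.unpair.1 (L.getD u.unpair.2 0)
  else vecCanon u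

def addStage (x y : ℕ) : ℕ := Nat.pair (Nat.pair 0 (Nat.pair x y)) (max x y)

def smulStage (a x : ℕ) : ℕ := Nat.pair (Nat.pair 1 (Nat.pair a x)) x

def codeStage (v r : ℕ) : ℕ := Nat.pair (Nat.pair 2 v) r

theorem request_addStage (x y : ℕ) (L : List ℕ) :
    request (addStage x y) L = vecAdd (L.getD x 0) (L.getD y 0) := by
  simp [request, addStage]

theorem request_smulStage (a x : ℕ) (L : List ℕ) :
    request (smulStage a x) L = vecSmul a (L.getD x 0) := by
  simp [request, smulStage]

theorem request_codeStage (v r : ℕ) (L : List ℕ) : request (codeStage v r) L = vecCanon v := by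
  simp [request, codeStage]

theorem vecCanon_request (s : ℕ) (L : List ℕ) : vecCanon (request s L) = request s L := by
  simp only [request]
  split_ifs <;> exact vecCanon_vecCanon _

/-- The fresh vector makes the list grow at every stage. -/
def extend (s : ℕ) (L : List ℕ) : List ℕ :=
  appendNew (request s L) L ++ [freshVec (appendNew (request s L) L)]

/-- At stage `s`, `b = Sa n s` says whether the list is collapsed onto the line `ℚ × {0}`. -/
def step (b : Bool) (s : ℕ) (L : List ℕ) : List ℕ :=
  cond b (collapseList (extend s L)) (extend s L)

def state (b : ℕ → Bool) : ℕ → List ℕ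
  | 0 => [0]
  | s + 1 => step (b s) s (state b s)

theorem getD_extend_of_lt {s i : ℕ} {L : List ℕ} (hi : i < L.length) :
    (extend s L).getD i 0 = L.getD i 0 := by
  rw [extend, List.getD_append _ _ _ _ (hi.trans_le (length_le_length_appendNew _ _)),
    getD_appendNew_of_lt hi]

theorem getD_extend_idxOf (s : ℕ) (L : List ℕ) :
    (extend s L).getD (L.idxOf (request s L)) 0 = request s L := by
  rw [extend, List.getD_append _ _ _ _ (idxOf_lt_length_appendNew _ _), getD_appendNew_idxOf]

theorem idxOf_lt_length_extend (s : ℕ) (L : List ℕ) :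
    L.idxOf (request s L) < (extend s L).length :=
  (idxOf_lt_length_appendNew _ _).trans (by simp [extend])

theorem length_lt_length_extend (s : ℕ) (L : List ℕ) : L.length < (extend s L).length := by
  rw [extend, List.length_append, List.length_singleton]
  exact Nat.lt_succ_of_le (length_le_length_appendNew _ _)

theorem IsCanonList.extend {L : List ℕ} (hL : IsCanonList L) (s : ℕ) :
    IsCanonList (extend s L) := by
  refine ⟨(nodup_appendNew _ hL.1).append (List.nodup_singleton _) ?_, fun v hv => ?_⟩
  · simpa using freshVec_not_mem _
  · rcases List.mem_append.1 hv with hv | hv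
    · rcases mem_appendNew.1 hv with rfl | hv
      exacts [vecCanon_request s L, hL.2 v hv]
    · rw [List.mem_singleton.1 hv]
      exact vecCanon_vecCanon _

theorem IsCanonList.collapseList {L : List ℕ} (hL : IsCanonList L) :
    IsCanonList (collapseList L) := by
  refine ⟨nodup_collapseList hL, fun v hv => ?_⟩
  obtain ⟨w, -, rfl⟩ := List.mem_map.1 hv
  exact vecCanon_vecCanon _

theorem IsCanonList.step {L : List ℕ} (hL : IsCanonList L) (b : Bool) (s : ℕ) :
    IsCanonList (step b s L) := by
  cases b
  exacts [hL.extend s, (hL.extend s).collapseList]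

theorem length_step (b : Bool) (s : ℕ) (L : List ℕ) :
    (step b s L).length = (extend s L).length := by
  cases b <;> simp [step, collapseList]

theorem getD_step {b : Bool} {s i : ℕ} {L : List ℕ} (hi : i < (extend s L).length) :
    (step b s L).getD i 0 =
      cond b (vecCollapse (goodCollapse (extend s L)) ((extend s L).getD i 0))
        ((extend s L).getD i 0) := by
  cases b
  · rfl
  · simp only [step, cond_true, collapseList]
    rw [List.getD_eq_getElem _ _ (by simpa using hi), List.getD_eq_getElem _ _ hi, List.getElem_map]

theorem exists_linearMap_step (b : Bool) (s : ℕ) (L : List ℕ) :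
    ∃ ψ : ℚ × ℚ →ₗ[ℚ] ℚ × ℚ, ∀ i < (extend s L).length,
      vecOf ((step b s L).getD i 0) = ψ (vecOf ((extend s L).getD i 0)) := by
  cases b
  · exact ⟨LinearMap.id, fun i hi => by rw [getD_step hi]; rfl⟩
  · exact ⟨collapse (goodCollapse (extend s L)), fun i hi => by
      rw [getD_step hi, cond_true, vecOf_vecCollapse]⟩

theorem getD_step_of_snd_eq_zero {b : Bool} {s i : ℕ} {L : List ℕ} (hL : IsCanonList L)
    (hi : i < (extend s L).length) (h : b = true → (vecOf ((extend s L).getD i 0)).2 = 0) :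
    (step b s L).getD i 0 = (extend s L).getD i 0 := by
  rw [getD_step hi]
  cases b
  · rfl
  · exact vecCollapse_of_snd_eq_zero _ ((hL.extend s).2 _ (getD_mem hi)) (h rfl)

theorem snd_vecOf_getD_step_true {s i : ℕ} {L : List ℕ} (hi : i < (extend s L).length) :
    (vecOf ((step true s L).getD i 0)).2 = 0 := by
  rw [getD_step hi, cond_true, vecOf_vecCollapse, collapse_apply]

end Construction

section State

variable (b : ℕ → Bool)

theorem state_succ (s : ℕ) : state b (s + 1) = step (b s) s (state b s) := rfl

theorem isCanonList_state (s : ℕ) : IsCanonList (state b s) := by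
  induction s with
  | zero => exact ⟨List.nodup_singleton 0, by simp [state, vecCanon_zero]⟩
  | succ s ih => exact ih.step _ _

theorem lt_length_state (s : ℕ) : s < (state b s).length := by
  induction s with
  | zero => simp [state]
  | succ s ih =>
    rw [state_succ, length_step]
    have := length_lt_length_extend s (state b s)
    omega

theorem length_state_mono : Monotone fun s => (state b s).length :=
  monotone_nat_of_le_succ fun s => by
    simpa only [state_succ, length_step] using (length_lt_length_extend s (state b s)).le

theorem exists_linearMap_state {s t : ℕ} (hst : s ≤ t) :
    ∃ ψ : ℚ × ℚ →ₗ[ℚ] ℚ × ℚ, ∀ i < (state b s).length,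
      vecOf ((state b t).getD i 0) = ψ (vecOf ((state b s).getD i 0)) := by
  induction t, hst using Nat.le_induction with
  | base => exact ⟨LinearMap.id, fun _ _ => rfl⟩
  | succ t hst ih =>
    obtain ⟨ψ, hψ⟩ := ih
    obtain ⟨χ, hχ⟩ := exists_linearMap_step (b t) t (state b t)
    refine ⟨χ ∘ₗ ψ, fun i hi => ?_⟩
    have hit : i < (state b t).length := hi.trans_le (length_state_mono b hst)
    rw [state_succ, hχ i (hit.trans (length_lt_length_extend _ _)), getD_extend_of_lt hit, hψ i hi]
    rfl

def requestIndex (s : ℕ) : ℕ := (state b s).idxOf (request s (state b s))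

theorem exists_linearMap_state_requestIndex {s t : ℕ} (hst : s < t) :
    ∃ ψ : ℚ × ℚ →ₗ[ℚ] ℚ × ℚ, (∀ i < (state b s).length,
      vecOf ((state b t).getD i 0) = ψ (vecOf ((state b s).getD i 0))) ∧
      vecOf ((state b t).getD (requestIndex b s) 0) = ψ (vecOf (request s (state b s))) := by
  obtain ⟨χ, hχ⟩ := exists_linearMap_step (b s) s (state b s)
  obtain ⟨ψ, hψ⟩ := exists_linearMap_state b hst
  have hlen : (state b (s + 1)).length = (extend s (state b s)).length := length_step _ _ _
  refine ⟨ψ ∘ₗ χ, fun i hi => ?_, ?_⟩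
  · have hi' := hi.trans (length_lt_length_extend s _)
    rw [hψ i (hlen ▸ hi'), state_succ, hχ i hi', getD_extend_of_lt hi]
    rfl
  · have hj := idxOf_lt_length_extend s (state b s)
    rw [requestIndex, hψ _ (hlen ▸ hj), state_succ, hχ _ hj, getD_extend_idxOf]
    rfl

theorem getD_state_eq_of_le {s t i : ℕ} (hst : s ≤ t) (hi : i < (state b s).length)
    (h : ∀ u, s ≤ u → b u = true → (vecOf ((state b s).getD i 0)).2 = 0) :
    (state b t).getD i 0 = (state b s).getD i 0 := by
  induction t, hst using Nat.le_induction with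
  | base => rfl
  | succ t hst ih =>
    have hit : i < (state b t).length := hi.trans_le (length_state_mono b hst)
    rw [state_succ, getD_step_of_snd_eq_zero (isCanonList_state b t)
      (hit.trans (length_lt_length_extend _ _)) fun hb => by
        rw [getD_extend_of_lt hit, ih]; exact h t hst hb, getD_extend_of_lt hit, ih]

theorem getD_state_succ_requestIndex {s : ℕ}
    (h : b s = true → (vecOf (request s (state b s))).2 = 0) :
    (state b (s + 1)).getD (requestIndex b s) 0 = request s (state b s) := by
  rw [state_succ, requestIndex, getD_step_of_snd_eq_zero (isCanonList_state b s)
    (idxOf_lt_length_extend _ _) (by rwa [getD_extend_idxOf]), getD_extend_idxOf]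

theorem snd_vecOf_getD_state_succ {s i : ℕ} (hb : b s = true) (hi : i < (state b s).length) :
    (vecOf ((state b (s + 1)).getD i 0)).2 = 0 := by
  rw [state_succ, hb]
  exact snd_vecOf_getD_step_true (hi.trans (length_lt_length_extend _ _))

/-- Every entry settles: after the last collapse if there are finitely many, and after the
first collapse past its index otherwise, since collapses fix the line `ℚ × {0}`. -/
theorem exists_eventually_getD_state_eq (i : ℕ) :
    ∃ c, ∀ᶠ t in atTop, (state b t).getD i 0 = c := by
  rcases Set.finite_or_infinite {u | b u = true} with hfin | hinf
  · obtain ⟨N, hN⟩ := hfin.bddAbove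
    have hi : i < (state b (max i (N + 1))).length :=
      (le_max_left _ _).trans_lt (lt_length_state b _)
    refine ⟨_, eventually_atTop.2 ⟨_, fun t ht => getD_state_eq_of_le b ht hi fun u hu hbu => ?_⟩⟩
    exact absurd (hN hbu) (by omega)
  · obtain ⟨u, hbu, hu⟩ := Set.Infinite.exists_gt hinf i
    have hi : i < (state b u).length := hu.trans (lt_length_state b u)
    have hi' : i < (state b (u + 1)).length := hi.trans_le (length_state_mono b u.le_succ)
    exact ⟨_, eventually_atTop.2 ⟨u + 1, fun t ht => getD_state_eq_of_le b ht hi' fun _ _ _ =>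
      snd_vecOf_getD_state_succ b hbu hi⟩⟩

end State

section Limit

variable (b : ℕ → Bool)

noncomputable def limitCode (i : ℕ) : ℕ := (exists_eventually_getD_state_eq b i).choose

theorem eventually_getD_state_eq_limitCode (i : ℕ) :
    ∀ᶠ t in atTop, (state b t).getD i 0 = limitCode b i :=
  (exists_eventually_getD_state_eq b i).choose_spec

/-- The vector of `ℚ²` that the element `i` of the limit structure stands for. -/
noncomputable def limitVec (i : ℕ) : ℚ × ℚ := vecOf (limitCode b i)

theorem limitCode_eq_of_forall_ge {s i c : ℕ} (h : ∀ t, s ≤ t → (state b t).getD i 0 = c) :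
    limitCode b i = c := by
  obtain ⟨t, ht, ht'⟩ :=
    ((eventually_getD_state_eq_limitCode b i).and (eventually_atTop.2 ⟨s, h⟩)).exists
  exact ht.symm.trans ht'

theorem exists_getD_state_eq_limitCode (i : ℕ) :
    ∃ t, i < (state b t).length ∧ (state b t).getD i 0 = limitCode b i := by
  obtain ⟨t, ht, hit⟩ :=
    ((eventually_getD_state_eq_limitCode b i).and (eventually_ge_atTop i)).exists
  exact ⟨t, hit.trans_lt (lt_length_state b t), ht⟩

theorem limitVec_injective : Function.Injective (limitVec b) := by
  intro x y hxy
  have hcanon : ∀ i, vecCanon (limitCode b i) = limitCode b i := fun i => by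
    obtain ⟨t, hit, ht⟩ := exists_getD_state_eq_limitCode b i
    exact ht ▸ (isCanonList_state b t).2 _ (getD_mem hit)
  have hcode := eq_of_vecOf_eq (hcanon x) (hcanon y) hxy
  obtain ⟨t, hx, hy, htx, hty⟩ := ((eventually_getD_state_eq_limitCode b x).and
    ((eventually_getD_state_eq_limitCode b y).and
      ((eventually_ge_atTop x).and (eventually_ge_atTop y)))).exists
  have hxt := htx.trans_lt (lt_length_state b t)
  have hyt := hty.trans_lt (lt_length_state b t)
  rw [← hx, ← hy, List.getD_eq_getElem _ _ hxt, List.getD_eq_getElem _ _ hyt] at hcode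
  exact ((isCanonList_state b t).1.getElem_inj_iff).1 hcode

theorem limitVec_zero : limitVec b 0 = 0 := by
  have h : limitCode b 0 = 0 := limitCode_eq_of_forall_ge b (s := 0) fun t ht =>
    getD_state_eq_of_le b ht (by simp [state]) fun _ _ _ => by simp [state]
  rw [limitVec, h, vecOf_zero]

theorem exists_linearMap_limitVec_requestIndex (s : ℕ) {x y : ℕ}
    (hx : x < (state b s).length) (hy : y < (state b s).length) :
    ∃ ψ : ℚ × ℚ →ₗ[ℚ] ℚ × ℚ, limitVec b x = ψ (vecOf ((state b s).getD x 0)) ∧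
      limitVec b y = ψ (vecOf ((state b s).getD y 0)) ∧
      limitVec b (requestIndex b s) = ψ (vecOf (request s (state b s))) := by
  obtain ⟨t, htx, hty, htz, hst⟩ := ((eventually_getD_state_eq_limitCode b x).and
    ((eventually_getD_state_eq_limitCode b y).and
      ((eventually_getD_state_eq_limitCode b (requestIndex b s)).and
        (eventually_gt_atTop s)))).exists
  obtain ⟨ψ, hψ, hψz⟩ := exists_linearMap_state_requestIndex b hst
  exact ⟨ψ, by rw [limitVec, ← htx, hψ x hx], by rw [limitVec, ← hty, hψ y hy],
    by rw [limitVec, ← htz, hψz]⟩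

def addIndex (x y : ℕ) : ℕ := requestIndex b (addStage x y)

def smulIndex (a x : ℕ) : ℕ := requestIndex b (smulStage a x)

theorem limitVec_addIndex (x y : ℕ) :
    limitVec b (addIndex b x y) = limitVec b x + limitVec b y := by
  have hlt : max x y < (state b (addStage x y)).length :=
    (Nat.right_le_pair _ _).trans_lt (lt_length_state b _)
  obtain ⟨ψ, hx, hy, hz⟩ := exists_linearMap_limitVec_requestIndex b (addStage x y)
    ((le_max_left x y).trans_lt hlt) ((le_max_right x y).trans_lt hlt)
  rw [addIndex, hz, request_addStage, vecOf_vecAdd, map_add, hx, hy]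

theorem limitVec_smulIndex (a x : ℕ) :
    limitVec b (smulIndex b a x) = ratOf a • limitVec b x := by
  have hx : x < (state b (smulStage a x)).length :=
    (Nat.right_le_pair _ _).trans_lt (lt_length_state b _)
  obtain ⟨ψ, hx, -, hz⟩ := exists_linearMap_limitVec_requestIndex b (smulStage a x) hx hx
  rw [smulIndex, hz, request_smulStage, vecOf_vecSmul, map_smul, hx]

theorem exists_limitCode_eq {v r : ℕ} (hv : vecCanon v = v)
    (h : ∀ u, codeStage v r ≤ u → b u = true → (vecOf v).2 = 0) :
    ∃ i, limitCode b i = v := by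
  set s := codeStage v r
  have hreq : request s (state b s) = v := by rw [request_codeStage, hv]
  have hs : (state b (s + 1)).getD (requestIndex b s) 0 = v := by
    rw [getD_state_succ_requestIndex b fun hb => hreq ▸ h s le_rfl hb, hreq]
  have hlen : requestIndex b s < (state b (s + 1)).length := by
    rw [state_succ, length_step]
    exact idxOf_lt_length_extend _ _
  refine ⟨requestIndex b s, limitCode_eq_of_forall_ge b (s := s + 1) fun t ht => ?_⟩
  rw [getD_state_eq_of_le b ht hlen fun u hu hb => hs ▸ h u (by omega) hb, hs]

theorem exists_limitVec_eq_of_snd_eq_zero {p : ℚ × ℚ} (hp : p.2 = 0) :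
    ∃ i, limitVec b i = p := by
  obtain ⟨v, hv, rfl⟩ := vecOf_surjective p
  obtain ⟨i, hi⟩ := exists_limitCode_eq b (r := 0) hv fun _ _ _ => hp
  exact ⟨i, by rw [limitVec, hi]⟩

theorem limitVec_surjective_of_finite (hfin : {u | b u = true}.Finite) :
    Function.Surjective (limitVec b) := by
  intro p
  obtain ⟨N, hN⟩ := hfin.bddAbove
  obtain ⟨v, hv, rfl⟩ := vecOf_surjective p
  obtain ⟨i, hi⟩ := exists_limitCode_eq b (r := N + 1) hv fun u hu hb =>
    absurd ((Nat.right_le_pair _ _).trans hu) (by simpa using hN hb)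
  exact ⟨i, by rw [limitVec, hi]⟩

theorem snd_limitVec_of_infinite (hinf : {u | b u = true}.Infinite) (i : ℕ) :
    (limitVec b i).2 = 0 := by
  obtain ⟨T, hT⟩ := eventually_atTop.1 (eventually_getD_state_eq_limitCode b i)
  obtain ⟨u, hbu, hu⟩ := Set.Infinite.exists_gt hinf (max T i)
  have hi : i < (state b u).length := ((le_max_right _ _).trans_lt hu).trans (lt_length_state b u)
  rw [limitVec, ← hT (u + 1) (by omega)]
  exact snd_vecOf_getD_state_succ b hbu hi

end Limit

section Computability

theorem primrecRel_vecOf_eq : PrimrecRel fun v w : ℕ => vecOf v = vecOf w :=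
  ((primrecRel_ratOf_eq.comp (primrec_unpair_fst.comp fst) (primrec_unpair_fst.comp snd)).and
    (primrecRel_ratOf_eq.comp (primrec_unpair_snd.comp fst) (primrec_unpair_snd.comp snd))).of_eq
    fun p => by simp [vecOf, Prod.ext_iff]

theorem primrec_vecCanon : Primrec vecCanon := primrec_leastCode _ primrecRel_vecOf_eq

theorem primrec₂_vecAdd : Primrec₂ vecAdd :=
  primrec_vecCanon.comp <| Primrec₂.natPair.comp
    (primrec₂_addCode.comp (primrec_unpair_fst.comp fst) (primrec_unpair_fst.comp snd))
    (primrec₂_addCode.comp (primrec_unpair_snd.comp fst) (primrec_unpair_snd.comp snd))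

theorem primrec₂_vecSmul : Primrec₂ vecSmul :=
  primrec_vecCanon.comp <| Primrec₂.natPair.comp
    (primrec₂_mulCode.comp fst (primrec_unpair_fst.comp snd))
    (primrec₂_mulCode.comp fst (primrec_unpair_snd.comp snd))

theorem primrec₂_vecCollapse : Primrec₂ vecCollapse :=
  primrec_vecCanon.comp <| Primrec₂.natPair.comp
    (primrec₂_addCode.comp (primrec_unpair_fst.comp snd)
      (primrec₂_mulCode.comp (primrec_natCode.comp fst) (primrec_unpair_snd.comp snd)))
    (const 0)

theorem primrec_list_sum : Primrec (List.sum : List ℕ → ℕ) :=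
  (list_foldr Primrec.id (const 0) (nat_add.comp (fst.comp snd) (snd.comp snd)).to₂).of_eq
    fun L => by induction L <;> simp_all

theorem primrec_freshVec : Primrec freshVec :=
  primrec_vecCanon.comp <| Primrec₂.natPair.comp
    (primrec_natCode.comp (Primrec.succ.comp primrec_list_sum)) (const 0)

theorem primrecPred_nodup {α : Type*} [Primcodable α] [DecidableEq α] :
    PrimrecPred (List.Nodup : List α → Prop) := by
  have hcount : Primrec₂ fun (L : List α) (a : α) => L.count a :=
    (list_length.comp (PrimrecRel.listFilter (R := fun x a => x = a) Primrec.eq)).of_eq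
      fun p => by simp [List.count_eq_length_filter]; rfl
  have hone : PrimrecRel fun (a : α) (L : List α) => L.count a = 1 :=
    Primrec.eq.comp (hcount.comp snd fst) (const 1)
  exact ((PrimrecRel.forall_mem_list hone).comp Primrec.id Primrec.id).of_eq
    fun L => List.nodup_iff_count_eq_one.symm

theorem primrec_goodCollapse : Primrec goodCollapse :=
  nat_findGreatest (nat_mul.comp list_length list_length |>.of_eq fun _ => (sq _).symm)
    (primrecPred_nodup.comp (list_map fst (primrec₂_vecCollapse.comp (snd.comp fst) snd).to₂))

theorem primrec_collapseList : Primrec collapseList :=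
  list_map Primrec.id (primrec₂_vecCollapse.comp (primrec_goodCollapse.comp fst) snd).to₂

theorem primrec₂_appendNew : Primrec₂ appendNew :=
  Primrec.ite ((PrimrecRel.exists_mem_list Primrec.eq).comp snd fst |>.of_eq fun p => by simp)
    snd (list_concat.comp snd fst)

theorem primrec₂_request : Primrec₂ request := by
  have hm := primrec_unpair_fst.comp (primrec_unpair_fst.comp (fst (α := ℕ) (β := List ℕ)))
  have hu := primrec_unpair_snd.comp (primrec_unpair_fst.comp (fst (α := ℕ) (β := List ℕ)))
  have hget := list_getD (α := ℕ) 0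
  exact Primrec.ite (Primrec.eq.comp hm (const 0))
    (primrec₂_vecAdd.comp (hget.comp snd (primrec_unpair_fst.comp hu))
      (hget.comp snd (primrec_unpair_snd.comp hu)))
    (Primrec.ite (Primrec.eq.comp hm (const 1))
      (primrec₂_vecSmul.comp (primrec_unpair_fst.comp hu)
        (hget.comp snd (primrec_unpair_snd.comp hu)))
      (primrec_vecCanon.comp hu))

theorem primrec₂_extend : Primrec₂ extend := by
  have h := primrec₂_appendNew.comp primrec₂_request snd
  exact list_concat.comp h (primrec_freshVec.comp h)

theorem primrec_step : Primrec fun p : Bool × ℕ × List ℕ => step p.1 p.2.1 p.2.2 := by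
  have h := primrec₂_extend.comp (fst.comp (snd (α := Bool))) (snd.comp snd)
  exact Primrec.cond fst (primrec_collapseList.comp h) h

variable {α : Type*} [Primcodable α] {B : α → ℕ → Bool}

theorem computable₂_state (hB : Computable₂ B) : Computable₂ fun a s => state (B a) s :=
  (Computable.nat_rec Computable.snd (Computable.const [0])
    (primrec_step.to_comp.comp (Computable.pair (hB.comp (Computable.fst.comp Computable.fst)
      (Computable.fst.comp Computable.snd)) Computable.snd)).to₂).of_eq fun p => by
    induction p.2 <;> simp_all [state]

theorem computable₂_requestIndex (hB : Computable₂ B) :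
    Computable₂ fun a s => requestIndex (B a) s := by
  have hL := computable₂_state hB
  exact (Primrec.list_idxOf.to_comp.comp (primrec₂_request.to_comp.comp Computable.snd hL) hL)

theorem computable_addIndex (hB : Computable₂ B) :
    Computable fun t : α × ℕ × ℕ => addIndex (B t.1) t.2.1 t.2.2 :=
  (computable₂_requestIndex hB).comp Computable.fst <| Primrec.to_comp <|
    Primrec₂.natPair.comp (Primrec₂.natPair.comp (const 0) (Primrec₂.natPair.comp
      (fst.comp snd) (snd.comp snd))) (nat_max.comp (fst.comp snd) (snd.comp snd))

theorem computable_smulIndex (hB : Computable₂ B) :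
    Computable fun t : α × ℕ × ℕ => smulIndex (B t.1) t.2.1 t.2.2 :=
  (computable₂_requestIndex hB).comp Computable.fst <| Primrec.to_comp <|
    Primrec₂.natPair.comp (Primrec₂.natPair.comp (const 1) (Primrec₂.natPair.comp
      (fst.comp snd) (snd.comp snd))) (snd.comp snd)

end Computability

section Dimension

variable (b : ℕ → Bool)

theorem isPresHom_limitVec : IsPresHom (addIndex b) (smulIndex b) 0 (limitVec b) :=
  ⟨limitVec_addIndex b, limitVec_smulIndex b, limitVec_zero b⟩

theorem dimEq_one_of_infinite (hinf : {u | b u = true}.Infinite) :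
    DimEq (addIndex b) (smulIndex b) 0 1 := by
  refine ((isPresHom_limitVec b).comp (LinearMap.fst ℚ ℚ ℚ)).dimEq
    ⟨fun x y h => limitVec_injective b (Prod.ext h ?_), fun q => ?_⟩ (Module.Basis.singleton _ ℚ)
  · rw [snd_limitVec_of_infinite b hinf, snd_limitVec_of_infinite b hinf]
  · obtain ⟨i, hi⟩ := exists_limitVec_eq_of_snd_eq_zero b (p := (q, 0)) rfl
    exact ⟨i, by simp [hi]⟩

theorem dimEq_two_of_finite (hfin : {u | b u = true}.Finite) :
    DimEq (addIndex b) (smulIndex b) 0 2 :=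
  (isPresHom_limitVec b).dimEq ⟨limitVec_injective b, limitVec_surjective_of_finite b hfin⟩
    (Module.Basis.finTwoProd ℚ)

end Dimension

end Pi2VectorSpaces

open Pi2VectorSpaces in
/-- Let `S` be a Π⁰₂ set given with a computable approximation `Sa` such that
`n ∈ S` iff `n ∈ S_s` for infinitely many `s`.  Then there is a uniformly
computable sequence of ℚ-vector spaces `(A n)` with `dim (A n) = 1` if `n ∈ S`
and `dim (A n) = 2` if `n ∉ S`. -/
theorem stmt9 (S : ℕ → Prop) (Sa : ℕ → ℕ → Bool) (hSa : Computable₂ Sa)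
    (happrox : ∀ n, S n ↔ {s : ℕ | Sa n s = true}.Infinite) :
    ∃ (Add Smul : ℕ → ℕ → ℕ → ℕ) (Zer : ℕ → ℕ),
      Computable (fun t : ℕ × ℕ × ℕ => Add t.1 t.2.1 t.2.2) ∧
      Computable (fun t : ℕ × ℕ × ℕ => Smul t.1 t.2.1 t.2.2) ∧
      Computable Zer ∧
      ∀ n, IsVecPres (Add n) (Smul n) (Zer n) ∧
        (S n → DimEq (Add n) (Smul n) (Zer n) 1) ∧
        (¬ S n → DimEq (Add n) (Smul n) (Zer n) 2) := by
  refine ⟨fun n => addIndex (Sa n), fun n => smulIndex (Sa n), fun _ => 0,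
    computable_addIndex hSa, computable_smulIndex hSa, Computable.const 0, fun n => ⟨?_, ?_, ?_⟩⟩
  · exact (isPresHom_limitVec (Sa n)).isVecPres (limitVec_injective (Sa n))
  · exact fun hS => dimEq_one_of_infinite (Sa n) ((happrox n).1 hS)
  · exact fun hS => dimEq_two_of_finite (Sa n) (Set.not_infinite.1 (mt (happrox n).2 hS))
end

section
/- Let G be a computable Abelian p-group and α a computable ordinal. Then: (1) G_{ω·α} is Π⁰_{2α} as a subset of G; (2) G_{ω·α+m} is Σ⁰_{2α+1}; (3) P_{ω·α} = G_{ω·α} ∩ P(G) is Π⁰_{2α}; (4) P_{ω·α+m} is Σ⁰_{2α+1}. -/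
/-- `(add, neg, zero)` is a presentation of an Abelian group on the universe ℕ. -/
def IsGrpPres (add : ℕ → ℕ → ℕ) (neg : ℕ → ℕ) (zero : ℕ) : Prop :=
  (∀ x y, add x y = add y x) ∧
  (∀ x y z, add (add x y) z = add x (add y z)) ∧
  (∀ x, add zero x = x) ∧
  (∀ x, add (neg x) x = zero)

/-- `nsm add zero k x = k • x` in the presented group. -/
def nsm (add : ℕ → ℕ → ℕ) (zero : ℕ) : ℕ → ℕ → ℕ
  | 0, _ => zero
  | k + 1, x => add x (nsm add zero k x)

/-- `Gword add zero p M x` says that `x ∈ G_{ω·M}`, where `G_{ω·0} = G` and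
`G_{ω·(M+1)} = ⋂ₘ p^m G_{ω·M}`. -/
def Gword (add : ℕ → ℕ → ℕ) (zero p : ℕ) : ℕ → ℕ → Prop
  | 0, _ => True
  | M + 1, x => ∀ m : ℕ, ∃ y, Gword add zero p M y ∧ nsm add zero (p ^ m) y = x

/-!
Membership in `G_{ω·(M+1)}` is `∀ m, ∃ y, y ∈ G_{ω·M} ∧ p^m • y = x`. Since the group operation is
computable, the matrix `p^m • y = x` is decidable, so each step `ω·M ↦ ω·(M+1)` adds one `∀∃`
block in front of a `Π⁰_{2M}` condition, and a single `∃ y` in front of it gives `G_{ω·M+m}`.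
Intersecting with the decidable set `P(G) = {x | p • x = 0}` keeps both classes.
-/

section ComputablePred

variable {α : Type*} [Primcodable α]

theorem ComputablePred.comp {β : Type*} [Primcodable β] {S : β → Prop} {f : α → β}
    (hS : ComputablePred S) (hf : Computable f) : ComputablePred fun x => S (f x) :=
  ComputablePred.computable_of_manyOneReducible (ManyOneReducible.mk S hf) hS

theorem ComputablePred.and {S T : α → Prop} :
    ComputablePred S → ComputablePred T → ComputablePred fun x => S x ∧ T x
  | ⟨_, hS⟩, ⟨_, hT⟩ => Computable.computablePred <| (Primrec.and.to_comp.comp hS hT).of_eq <| by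
      simp

theorem ComputablePred.or {S T : α → Prop} :
    ComputablePred S → ComputablePred T → ComputablePred fun x => S x ∨ T x
  | ⟨_, hS⟩, ⟨_, hT⟩ => Computable.computablePred <| (Primrec.or.to_comp.comp hS hT).of_eq <| by
      simp

theorem Computable.computablePred_eq {β : Type*} [Primcodable β] [DecidableEq β] {f g : α → β}
    (hf : Computable f) (hg : Computable g) : ComputablePred fun x => f x = g x :=
  Computable.computablePred (Primrec.eq.decide.to_comp.comp hf hg)

end ComputablePred

theorem Computable.unpair_fst : Computable fun z : ℕ => z.unpair.1 :=
  (Primrec.fst.comp Primrec.unpair).to_comp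

theorem Computable.unpair_snd : Computable fun z : ℕ => z.unpair.2 :=
  (Primrec.snd.comp Primrec.unpair).to_comp

theorem Computable₂.natPair : Computable₂ Nat.pair :=
  Primrec₂.natPair.to_comp

open Computable

namespace SigmaN

theorem comp : ∀ {n : ℕ} {S : ℕ → Prop}, SigmaN n S → ∀ {f : ℕ → ℕ},
    Computable f → SigmaN n fun x => S (f x)
  | 0, _, h, _, hf => ComputablePred.comp h hf
  | _ + 1, _, ⟨R, hR, hS⟩, f, hf => by
    refine ⟨fun z => R (Nat.pair (f z.unpair.1) z.unpair.2),
      hR.comp (Computable₂.natPair.comp (hf.comp unpair_fst) unpair_snd), fun x => ?_⟩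
    simpa only [Nat.unpair_pair] using hS (f x)

theorem of_piN_exists {n : ℕ} {S : ℕ → ℕ → Prop}
    (h : PiN n fun z => S z.unpair.1 z.unpair.2) : SigmaN (n + 1) fun x => ∃ y, S x y :=
  ⟨_, h, fun x => by simp only [Nat.unpair_pair, not_not]⟩

theorem exists_of_unpair {n : ℕ} {S : ℕ → ℕ → Prop}
    (h : SigmaN (n + 1) fun z => S z.unpair.1 z.unpair.2) :
    SigmaN (n + 1) fun x => ∃ y, S x y := by
  obtain ⟨R, hR, hS⟩ := h
  refine ⟨fun u => R (Nat.pair (Nat.pair u.unpair.1 u.unpair.2.unpair.1) u.unpair.2.unpair.2),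
    hR.comp (Computable₂.natPair.comp
      (Computable₂.natPair.comp unpair_fst (unpair_fst.comp unpair_snd))
      (unpair_snd.comp unpair_snd)),
    fun x => ⟨fun ⟨y, hy⟩ => ?_, fun ⟨w, hw⟩ => ?_⟩⟩
  · obtain ⟨w, hw⟩ := (hS (Nat.pair x y)).1 (by simpa only [Nat.unpair_pair] using hy)
    exact ⟨Nat.pair y w, by simpa only [Nat.unpair_pair] using hw⟩
  · simp only [Nat.unpair_pair] at hw
    exact ⟨w.unpair.1, by simpa only [Nat.unpair_pair] using (hS _).2 ⟨w.unpair.2, hw⟩⟩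

end SigmaN

theorem PiN.comp {n : ℕ} {S : ℕ → Prop} (h : PiN n S) {f : ℕ → ℕ} (hf : Computable f) :
    PiN n fun x => S (f x) :=
  SigmaN.comp h hf

theorem PiN.sigmaN_succ {n : ℕ} {S : ℕ → Prop} (h : PiN n S) : SigmaN (n + 1) S := by
  simpa only [exists_const] using SigmaN.of_piN_exists (S := fun x (_ : ℕ) => S x) (h.comp unpair_fst)

theorem SigmaN.succ : ∀ {n : ℕ} {S : ℕ → Prop}, SigmaN n S → SigmaN (n + 1) S
  | 0, _, h => PiN.sigmaN_succ (n := 0) (ComputablePred.not h)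
  | _ + 1, _, ⟨R, hR, hS⟩ => ⟨R, hR.succ, hS⟩

theorem SigmaN.of_computablePred {S : ℕ → Prop} (h : ComputablePred S) : ∀ n, SigmaN n S
  | 0 => h
  | n + 1 => (of_computablePred h n).succ

theorem PiN.of_computablePred {S : ℕ → Prop} (h : ComputablePred S) (n : ℕ) : PiN n S :=
  SigmaN.of_computablePred h.not n

/-- Conjunction and disjunction are proved together: the witness for `∧` at level `n + 1` is a
pair of witnesses, whose matrix is a disjunction at level `n`, and dually. -/
theorem SigmaN.and_or : ∀ (n : ℕ) {S T : ℕ → Prop}, SigmaN n S → SigmaN n T →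
    SigmaN n (fun x => S x ∧ T x) ∧ SigmaN n (fun x => S x ∨ T x)
  | 0, _, _, hS, hT => ⟨ComputablePred.and hS hT, ComputablePred.or hS hT⟩
  | n + 1, _, _, ⟨R₁, hR₁, hS⟩, ⟨R₂, hR₂, hT⟩ => by
    constructor
    · refine ⟨fun z => R₁ (Nat.pair z.unpair.1 z.unpair.2.unpair.1) ∨
        R₂ (Nat.pair z.unpair.1 z.unpair.2.unpair.2),
        (and_or n (hR₁.comp (Computable₂.natPair.comp unpair_fst (unpair_fst.comp unpair_snd)))
          (hR₂.comp (Computable₂.natPair.comp unpair_fst (unpair_snd.comp unpair_snd)))).2,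
        fun x => ⟨fun ⟨hSx, hTx⟩ => ?_, fun ⟨y, hy⟩ => ?_⟩⟩
      · obtain ⟨y₁, hy₁⟩ := (hS x).1 hSx
        obtain ⟨y₂, hy₂⟩ := (hT x).1 hTx
        exact ⟨Nat.pair y₁ y₂, by simp only [Nat.unpair_pair]; tauto⟩
      · simp only [Nat.unpair_pair, not_or] at hy
        exact ⟨(hS x).2 ⟨_, hy.1⟩, (hT x).2 ⟨_, hy.2⟩⟩
    · refine ⟨fun z => R₁ z ∧ R₂ z, (and_or n hR₁ hR₂).1, fun x => ?_⟩
      simp only [hS, hT, not_and_or, exists_or]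

theorem SigmaN.and {n : ℕ} {S T : ℕ → Prop} (hS : SigmaN n S) (hT : SigmaN n T) :
    SigmaN n fun x => S x ∧ T x :=
  (and_or n hS hT).1

theorem PiN.and {n : ℕ} {S T : ℕ → Prop} (hS : PiN n S) (hT : PiN n T) :
    PiN n fun x => S x ∧ T x := by
  simpa only [PiN, not_and_or] using (SigmaN.and_or n hS hT).2

section Gword

variable {add : ℕ → ℕ → ℕ} (hadd : Computable₂ add) (zero p : ℕ)
include hadd

theorem computable₂_nsm : Computable₂ (nsm add zero) := by
  refine Computable₂.mk ((Computable.nat_rec fst (const zero)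
    (hadd.comp (snd.comp fst) (snd.comp snd)).to₂).of_eq fun a => ?_)
  induction a.1 with
  | zero => rfl
  | succ k ih => simp [nsm, ih]

/-- `x ∈ p^m G_{ω·M}`, uniformly in `⟨x, m⟩`. -/
theorem sigmaN_succ_exists_gword_nsm_pow {n M : ℕ} (hM : PiN n (Gword add zero p M)) :
    SigmaN (n + 1) fun w =>
      ∃ y, Gword add zero p M y ∧ nsm add zero (p ^ w.unpair.2) y = w.unpair.1 := by
  have hpow : Computable fun m : ℕ => p ^ m :=
    (Primrec₂.unpaired'.1 Nat.Primrec.pow).to_comp.comp (const p) Computable.id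
  refine SigmaN.of_piN_exists (PiN.and (hM.comp unpair_snd) (PiN.of_computablePred ?_ n))
  exact ((computable₂_nsm hadd zero).comp (hpow.comp (unpair_snd.comp unpair_fst))
    unpair_snd).computablePred_eq (unpair_fst.comp unpair_fst)

theorem piN_gword : ∀ M, PiN (2 * M) (Gword add zero p M)
  | 0 => PiN.of_computablePred (Computable.computablePred (p := fun _ => True) (const true)) 0
  | M + 1 => by
    have hdiv := sigmaN_succ_exists_gword_nsm_pow hadd zero p (piN_gword M)
    have hndiv : PiN (2 * M + 1) fun w =>
        ¬ ∃ y, Gword add zero p M y ∧ nsm add zero (p ^ w.unpair.2) y = w.unpair.1 := by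
      simpa only [PiN, not_not] using hdiv
    have h := SigmaN.exists_of_unpair
      (S := fun x m => ¬ ∃ y, Gword add zero p M y ∧ nsm add zero (p ^ m) y = x) hndiv.sigmaN_succ
    rw [mul_add_one]
    simpa only [PiN, Gword, not_forall] using h

theorem sigmaN_exists_gword_nsm_pow (M m : ℕ) :
    SigmaN (2 * M + 1) fun x => ∃ y, Gword add zero p M y ∧ nsm add zero (p ^ m) y = x := by
  simpa only [Nat.unpair_pair, id_eq] using (sigmaN_succ_exists_gword_nsm_pow hadd zero p
    (piN_gword hadd zero p M)).comp (Computable₂.natPair.comp Computable.id (const m))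

end Gword

theorem stmt11_general (p : ℕ)
    (add : ℕ → ℕ → ℕ) (zero : ℕ)
    (hadd : Computable₂ add) :
    ∀ M m : ℕ,
      PiN (2 * M) (Gword add zero p M) ∧
      SigmaN (2 * M + 1)
        (fun x => ∃ y, Gword add zero p M y ∧ nsm add zero (p ^ m) y = x) ∧
      PiN (2 * M) (fun x => Gword add zero p M x ∧ nsm add zero p x = zero) ∧
      SigmaN (2 * M + 1)
        (fun x => (∃ y, Gword add zero p M y ∧ nsm add zero (p ^ m) y = x) ∧
          nsm add zero p x = zero) := by
  intro M m
  have hG := piN_gword hadd zero p M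
  have hdiv := sigmaN_exists_gword_nsm_pow hadd zero p M m
  have hP : ComputablePred fun x => nsm add zero p x = zero :=
    ((computable₂_nsm hadd zero).comp (const p) Computable.id).computablePred_eq (const zero)
  exact ⟨hG, hdiv, hG.and (PiN.of_computablePred hP _),
    hdiv.and (SigmaN.of_computablePred hP _)⟩

/-- Barker's lemma.  Let `G` be a computable Abelian `p`-group (presented by
`(add, neg, zero)` on ℕ).  Then for all `M, m`: `G_{ω·M}` is Π⁰₂M,
`G_{ω·M+m}` is Σ⁰₂M₊₁, `P_{ω·M}` is Π⁰₂M, and `P_{ω·M+m}` is Σ⁰₂M₊₁. -/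
theorem stmt11 (p : ℕ) (hp : p.Prime)
    (add : ℕ → ℕ → ℕ) (neg : ℕ → ℕ) (zero : ℕ)
    (hpres : IsGrpPres add neg zero)
    (hadd : Computable₂ add) (hneg : Computable neg)
    (hpgroup : ∀ x, ∃ n, nsm add zero (p ^ n) x = zero) :
    ∀ M m : ℕ,
      PiN (2 * M) (Gword add zero p M) ∧
      SigmaN (2 * M + 1)
        (fun x => ∃ y, Gword add zero p M y ∧ nsm add zero (p ^ m) y = x) ∧
      PiN (2 * M) (fun x => Gword add zero p M x ∧ nsm add zero p x = zero) ∧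
      SigmaN (2 * M + 1)
        (fun x => (∃ y, Gword add zero p M y ∧ nsm add zero (p ^ m) y = x) ∧
          nsm add zero p x = zero) :=
  stmt11_general p add zero hadd
end

section
/- Let C be a reduced Abelian p-group of length N with a unique k < N such that u_k(C) = ∞ and u_m(C) = 0 for all m < k. Then C ≅ H ⊕ (Z/p^{k+1})^{(ω)} where H is a finite direct sum of cyclic groups Z/p^{i+1} with k < i < N; and any countable Abelian p-group G of length ≤ N with u_m(G) = 0 for m < k, with p^{k+1}G ≅ p^{k+1}C, and containing subgroups isomorphic to (Z/p^{k+1})^r for every r, is isomorphic to C. -/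
/-- The `j`-th Ulm invariant of `G` is infinite. -/
def UlmInf (G : Type*) [AddCommGroup G] (p j : ℕ) : Prop :=
  Infinite ((Psub G p j) ⧸ ((Psub G p (j + 1)).addSubgroupOf (Psub G p j)))

/-- The `j`-th Ulm invariant of `G` is zero. -/
def UlmZero (G : Type*) [AddCommGroup G] (p j : ℕ) : Prop :=
  Psub G p j ≤ Psub G p (j + 1)

abbrev UlmQuot (G : Type*) [AddCommGroup G] (p j : ℕ) :=
  Psub G p j ⧸ (Psub G p (j + 1)).addSubgroupOf (Psub G p j)

def AddSubgroup.subquotientCongr {G H : Type*} [AddCommGroup G] [AddCommGroup H]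
    {A B : AddSubgroup G} {A' B' : AddSubgroup H} (e : A ≃+ A')
    (he : ∀ x : A, (e x : H) ∈ B' ↔ (x : G) ∈ B) :
    A ⧸ B.addSubgroupOf A ≃+ A' ⧸ B'.addSubgroupOf A' :=
  QuotientAddGroup.congr _ _ e <| by
    ext x
    rw [← AddEquiv.toAddMonoidHom_eq_coe, AddSubgroup.mem_map_equiv, AddSubgroup.mem_addSubgroupOf,
      AddSubgroup.mem_addSubgroupOf, ← he, AddEquiv.apply_symm_apply]

section Basic

variable {G H : Type*} [AddCommGroup G] [AddCommGroup H] {p j : ℕ}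

lemma mem_smulSub {n : ℕ} {x : G} : x ∈ smulSub G n ↔ ∃ y, n • y = x := Iff.rfl

lemma mem_Psub {x : G} : x ∈ Psub G p j ↔ x ∈ smulSub G (p ^ j) ∧ p • x = 0 := Iff.rfl

lemma Psub_antitone : Antitone (Psub G p) := by
  rintro i j h x ⟨⟨y, rfl⟩, hx⟩
  refine ⟨⟨p ^ (j - i) • y, ?_⟩, hx⟩
  simp only [smulHom, AddMonoidHom.coe_mk, ZeroHom.coe_mk, smul_smul, ← pow_add,
    Nat.add_sub_cancel' h]

lemma Psub_eq_bot {N : ℕ} (hG : ∀ x : G, p ^ N • x = 0) (hj : N ≤ j) : Psub G p j = ⊥ := by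
  refine eq_bot_iff.2 ?_
  rintro _ ⟨⟨y, rfl⟩, -⟩
  show p ^ j • y = 0
  rw [← Nat.sub_add_cancel hj, pow_add, mul_smul, hG, smul_zero]

lemma AddEquiv.map_mem_Psub_iff (e : G ≃+ H) {x : G} : e x ∈ Psub H p j ↔ x ∈ Psub G p j := by
  simp only [mem_Psub, mem_smulSub, ← map_nsmul, EmbeddingLike.map_eq_zero_iff]
  exact and_congr_left' ⟨fun ⟨y, hy⟩ => ⟨e.symm y, by simp [← map_nsmul, hy]⟩,
    fun ⟨y, hy⟩ => ⟨e y, by simp [← map_nsmul, hy]⟩⟩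

lemma AddEquiv.map_Psub (e : G ≃+ H) : (Psub G p j).map e.toAddMonoidHom = Psub H p j := by
  ext x
  rw [AddSubgroup.mem_map_equiv, ← e.map_mem_Psub_iff, e.apply_symm_apply]

def AddEquiv.psubCongr (e : G ≃+ H) (p j : ℕ) : Psub G p j ≃+ Psub H p j :=
  (e.addSubgroupMap _).trans (AddEquiv.addSubgroupCongr e.map_Psub)

def AddEquiv.ulmQuotCongr (e : G ≃+ H) (p j : ℕ) : UlmQuot G p j ≃+ UlmQuot H p j :=
  AddSubgroup.subquotientCongr (e.psubCongr p j) fun _ => e.map_mem_Psub_iff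

lemma mem_Psub_smulSub {t : ℕ} {x : smulSub G (p ^ t)} :
    x ∈ Psub (smulSub G (p ^ t)) p j ↔ (x : G) ∈ Psub G p (t + j) := by
  obtain ⟨x, hx⟩ := x
  simp only [mem_Psub, mem_smulSub, Subtype.ext_iff, AddSubgroup.coe_nsmul, AddSubgroup.coe_zero]
  refine and_congr_left' ⟨?_, ?_⟩
  · rintro ⟨⟨_, z, rfl⟩, rfl⟩
    exact ⟨z, by simp [smulHom, smul_smul, ← pow_add, add_comm]⟩
  · rintro ⟨z, rfl⟩
    exact ⟨⟨_, z, rfl⟩, by simp [smulHom, smul_smul, ← pow_add, add_comm]⟩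

lemma Psub_le_smulSub (t : ℕ) : Psub G p (t + j) ≤ smulSub G (p ^ t) := by
  rintro _ ⟨⟨y, rfl⟩, -⟩
  exact ⟨p ^ j • y, by simp [smulHom, smul_smul, ← pow_add]⟩

def psubShift (G : Type*) [AddCommGroup G] (p t j : ℕ) :
    Psub (smulSub G (p ^ t)) p j ≃+ Psub G p (t + j) where
  toFun x := ⟨x.1, mem_Psub_smulSub.1 x.2⟩
  invFun x := ⟨⟨x, Psub_le_smulSub t x.2⟩, mem_Psub_smulSub.2 x.2⟩
  map_add' _ _ := rfl

def ulmQuotShift (G : Type*) [AddCommGroup G] (p t j : ℕ) :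
    UlmQuot (smulSub G (p ^ t)) p j ≃+ UlmQuot G p (t + j) :=
  AddSubgroup.subquotientCongr (psubShift G p t j) fun x =>
    (mem_Psub_smulSub (j := j + 1) (x := x.1)).symm

instance [Countable G] : Countable (UlmQuot G p j) :=
  (QuotientAddGroup.mk'_surjective _).countable

lemma subsingleton_ulmQuot (h : UlmZero G p j) : Subsingleton (UlmQuot G p j) := by
  rw [UlmQuot, AddSubgroup.addSubgroupOf_eq_top.2 h]
  exact QuotientAddGroup.subsingleton_quotient_top

lemma finite_Psub_of_finite_ulmQuot [Finite (Psub G p (j + 1))] [Finite (UlmQuot G p j)] :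
    Finite (Psub G p j) :=
  have : Finite ((Psub G p (j + 1)).addSubgroupOf (Psub G p j)) :=
    .of_equiv _ (AddSubgroup.addSubgroupOfEquivOfLe (Psub_antitone j.le_succ)).symm.toEquiv
  .of_addSubgroup_quotient ((Psub G p (j + 1)).addSubgroupOf (Psub G p j))

lemma infinite_ulmQuot [Infinite (Psub G p j)] [Finite (Psub G p (j + 1))] :
    Infinite (UlmQuot G p j) := by
  by_contra h
  have := not_infinite_iff_finite.1 h
  have := finite_Psub_of_finite_ulmQuot (G := G) (p := p) (j := j)
  exact not_finite (Psub G p j)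

lemma finite_Psub_of_forall_finite_ulmQuot {N : ℕ} (hG : ∀ x : G, p ^ N • x = 0)
    (h : ∀ i, j ≤ i → i < N → Finite (UlmQuot G p i)) : Finite (Psub G p j) := by
  induction hd : N - j generalizing j with
  | zero => rw [Psub_eq_bot hG (by omega)]; infer_instance
  | succ d ih =>
    have := ih (j := j + 1) (fun i hi => h i (by omega)) (by omega)
    have := h j le_rfl (by omega)
    exact finite_Psub_of_finite_ulmQuot

end Basic

open Submodule in
theorem exists_linearIndepOn_span_eq_of_antitone {K V : Type*} [DivisionRing K] [AddCommGroup V]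
    [Module K V] (N : ℕ) (W : ℕ → Submodule K V) (hW : Antitone W) (hN : W N = ⊥) :
    ∃ (s : Set V) (h : V → ℕ), LinearIndepOn K id s ∧ ∀ t, span K {x ∈ s | t ≤ h x} = W t := by
  induction N generalizing W with
  | zero =>
    refine ⟨∅, 0, linearIndepOn_empty K id, fun t => ?_⟩
    simpa using (eq_bot_iff.2 (hN ▸ hW (Nat.zero_le t))).symm
  | succ N ih =>
    obtain ⟨s, h, hs, hspan⟩ := ih (fun t => W (t + 1)) (fun a b hab => hW (by omega)) hN
    have hsW : s ⊆ W 0 := by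
      have := (hspan 0).le.trans (hW (Nat.zero_le 1))
      simpa using (subset_span.trans this : _ ⊆ (W 0 : Set V))
    obtain ⟨b, hbW, hsb, hWb, hb⟩ := exists_linearIndepOn_id_extension hs hsW
    classical
    refine ⟨b, fun x => if x ∈ s then h x + 1 else 0, hb, fun t => ?_⟩
    cases t with
    | zero =>
      simpa using le_antisymm (span_le.2 hbW) hWb
    | succ t =>
      rw [← hspan t]
      congr 1
      ext x
      by_cases hx : x ∈ s
      · simp [hx, hsb hx]
      · simp [hx]

lemma ZMod.pow_dvd_val_of_smul_eq_zero {p j : ℕ} (hp : 0 < p) {a : ZMod (p ^ (j + 1))}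
    (ha : p • a = 0) : p ^ j ∣ a.val := by
  have : NeZero (p ^ (j + 1)) := ⟨(pow_pos hp _).ne'⟩
  have h : ((p * a.val : ℕ) : ZMod (p ^ (j + 1))) = 0 := by
    rwa [Nat.cast_mul, ZMod.natCast_zmod_val, ← nsmul_eq_mul]
  rw [ZMod.natCast_eq_zero_iff] at h
  generalize a.val = v at h ⊢
  rw [pow_succ'] at h
  exact Nat.dvd_of_mul_dvd_mul_left hp h

lemma ZMod.eq_zero_of_dvd_val_div {p j : ℕ} (hp : 0 < p) {a : ZMod (p ^ (j + 1))}
    (hj : p ^ j ∣ a.val) (h : p ∣ a.val / p ^ j) : a = 0 := by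
  have : NeZero (p ^ (j + 1)) := ⟨(pow_pos hp _).ne'⟩
  have key : p * p ^ j ∣ a.val / p ^ j * p ^ j := mul_dvd_mul h dvd_rfl
  rw [Nat.div_mul_cancel hj] at key
  rw [← ZMod.natCast_zmod_val a, ZMod.natCast_eq_zero_iff]
  generalize a.val = v at key ⊢
  rwa [pow_succ']

def zmodHom {G : Type*} [AddCommGroup G] {n : ℕ} (x : G) (hx : n • x = 0) : ZMod n →+ G :=
  ZMod.lift n ⟨zmultiplesHom G x, by simpa using hx⟩

lemma zmodHom_apply {G : Type*} [AddCommGroup G] {n : ℕ} [NeZero n] (x : G) (hx : n • x = 0)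
    (a : ZMod n) : zmodHom x hx a = a.val • x := by
  conv_lhs => rw [← ZMod.natCast_zmod_val a, ← Int.cast_natCast]
  rw [zmodHom, ZMod.lift_coe, zmultiplesHom_apply, natCast_zsmul]

lemma injective_of_smul_eq_zero {M G : Type*} [AddCommGroup M] [AddCommGroup G] {p N : ℕ}
    (φ : M →+ G) (hM : ∀ x : M, p ^ N • x = 0) (h : ∀ x, p • x = 0 → φ x = 0 → x = 0) :
    Function.Injective φ := by
  refine (injective_iff_map_eq_zero φ).2 fun x hx => ?_
  suffices ∀ m (x : M), p ^ m • x = 0 → φ x = 0 → x = 0 from this N x (hM x) hx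
  intro m
  induction m with
  | zero => simp
  | succ m ih =>
    intro x hxm hx
    refine h x (ih _ ?_ (by rw [map_nsmul, hx, smul_zero])) hx
    rwa [smul_smul, ← pow_succ]

abbrev CyclicModel (p N : ℕ) (B : Fin N → Type*) : Type _ :=
  ∀ j : Fin N, B j →₀ ZMod (p ^ ((j : ℕ) + 1))

lemma CyclicModel.pow_smul_eq_zero {p N : ℕ} {B : Fin N → Type*} (f : CyclicModel p N B) :
    p ^ N • f = 0 := by
  funext j
  ext i
  show p ^ N • f j i = 0
  rw [nsmul_eq_mul, (ZMod.natCast_eq_zero_iff _ _).2 (pow_dvd_pow p j.2), zero_mul]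

noncomputable def CyclicModel.congr {p N : ℕ} {B B' : Fin N → Type*} (e : ∀ j, B j ≃ B' j) :
    CyclicModel p N B ≃+ CyclicModel p N B' :=
  AddEquiv.piCongrRight fun j => Finsupp.domCongr (e j)

abbrev socle (G : Type*) [AddCommGroup G] (p : ℕ) : AddSubgroup G := (smulHom G p).ker

instance (G : Type*) [AddCommGroup G] (p : ℕ) : Module (ZMod p) (socle G p) :=
  AddCommGroup.zmodModule fun x => Subtype.ext x.2

def socleFiltration (G : Type*) [AddCommGroup G] (p t : ℕ) : Submodule (ZMod p) (socle G p) :=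
  AddSubgroup.toZModSubmodule p ((Psub G p t).comap (socle G p).subtype)

universe u

section PBasis

variable {G : Type u} [AddCommGroup G] {p N : ℕ}

lemma mem_socleFiltration {t : ℕ} {x : socle G p} :
    x ∈ socleFiltration G p t ↔ (x : G) ∈ Psub G p t := Iff.rfl

lemma socleFiltration_antitone : Antitone (socleFiltration G p) :=
  fun _ _ h _ hx => Psub_antitone h hx

lemma socleFiltration_eq_bot (hG : ∀ x : G, p ^ N • x = 0) : socleFiltration G p N = ⊥ :=
  eq_bot_iff.2 fun x hx => by
    have : (x : G) ∈ (⊥ : AddSubgroup G) := Psub_eq_bot hG le_rfl ▸ hx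
    exact Subtype.ext this

lemma smul_mem_socleFiltration {t : ℕ} {x : G} (hx : p • x = 0) (y : G) (hy : p ^ t • y = x) :
    (⟨x, hx⟩ : socle G p) ∈ socleFiltration G p t :=
  ⟨⟨y, hy⟩, hx⟩

/-- The data of a decomposition of `G` into cyclic groups: `lift i` generates a summand of order
`p ^ (height i + 1)`, and the socle vectors `vec i` form a basis of `G[p]` adapted to the
filtration by the `P_t(G)`. -/
structure PBasis (G : Type*) [AddCommGroup G] (p N : ℕ) (ι : Type*) where
  height : ι → Fin N
  lift : ι → G
  vec : ι → socle G p
  pow_height_smul_lift : ∀ i, p ^ (height i : ℕ) • lift i = vec i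
  linearIndependent : LinearIndependent (ZMod p) vec
  socleFiltration_le : ∀ t : ℕ,
    socleFiltration G p t ≤ Submodule.span (ZMod p) (vec '' {i | t ≤ height i})

namespace PBasis

variable {ι : Type*} (b : PBasis G p N ι)

abbrev fiber (j : Fin N) : Type _ := {i // b.height i = j}

lemma vec_mem_socleFiltration {t : ℕ} {i : ι} (hi : t ≤ b.height i) :
    b.vec i ∈ socleFiltration G p t :=
  smul_mem_socleFiltration (b.vec i).2 (p ^ ((b.height i : ℕ) - t) • b.lift i) <| by
    rw [smul_smul, ← pow_add, Nat.add_sub_cancel' hi, b.pow_height_smul_lift]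

lemma span_eq (t : ℕ) :
    Submodule.span (ZMod p) (b.vec '' {i | t ≤ b.height i}) = socleFiltration G p t :=
  le_antisymm (Submodule.span_le.2 <| by rintro _ ⟨i, hi, rfl⟩; exact b.vec_mem_socleFiltration hi)
    (b.socleFiltration_le t)

lemma pow_smul_lift_eq_zero {j : Fin N} (i : b.fiber j) : p ^ ((j : ℕ) + 1) • b.lift i = 0 := by
  obtain ⟨i, rfl⟩ := i
  rw [pow_succ', mul_smul, b.pow_height_smul_lift]
  exact (b.vec i).2

noncomputable def modelHom : CyclicModel p N b.fiber →+ G :=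
  ∑ j, (Finsupp.liftAddHom fun i : b.fiber j => zmodHom _ (b.pow_smul_lift_eq_zero i)).comp
    (Pi.evalAddMonoidHom _ j)

lemma closure_range_lift (hG : ∀ x : G, p ^ N • x = 0) :
    AddSubgroup.closure (Set.range b.lift) = ⊤ := by
  set R := AddSubgroup.closure (Set.range b.lift)
  -- `P_t ⊆ p^t R`, so an `x` with `p^(t+1) • x = 0` differs from an element of `R` by one with
  -- `p^t • x = 0`.
  have hdiv : ∀ t, socleFiltration G p t ≤
      AddSubgroup.toZModSubmodule p ((R.map (smulHom G (p ^ t))).comap (socle G p).subtype) := by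
    refine fun t => (b.socleFiltration_le t).trans (Submodule.span_le.2 ?_)
    rintro _ ⟨i, hi, rfl⟩
    change (b.vec i : G) ∈ R.map (smulHom G (p ^ t))
    refine ⟨p ^ ((b.height i : ℕ) - t) • b.lift i,
      AddSubgroup.nsmul_mem _ (AddSubgroup.subset_closure (Set.mem_range_self i)) _, ?_⟩
    simp only [smulHom, AddMonoidHom.coe_mk, ZeroHom.coe_mk, smul_smul, ← pow_add,
      Nat.add_sub_cancel' hi, b.pow_height_smul_lift]
  suffices ∀ t (x : G), p ^ t • x = 0 → x ∈ R from eq_top_iff.2 fun x _ => this N x (hG x)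
  intro t
  induction t with
  | zero => simp
  | succ t ih =>
    intro x hx
    have hpx : p • (p ^ t • x) = 0 := by rwa [smul_smul, ← pow_succ']
    obtain ⟨z, hzR, hz⟩ := hdiv t (smul_mem_socleFiltration hpx x rfl)
    have := ih (x - z) (by rw [smul_sub, sub_eq_zero]; exact hz.symm)
    simpa using R.add_mem this hzR

variable [Fact p.Prime]

lemma modelHom_apply (f : CyclicModel p N b.fiber) :
    b.modelHom f = ∑ j, (f j).sum fun i a => a.val • b.lift i := by
  have (j : Fin N) : NeZero (p ^ ((j : ℕ) + 1)) :=
    ⟨(pow_pos (Fact.out : p.Prime).pos _).ne'⟩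
  simp [modelHom, Finsupp.sum, zmodHom_apply]

lemma lift_mem_range (i : ι) : b.lift i ∈ b.modelHom.range := by
  have : Fact (1 < p ^ ((b.height i : ℕ) + 1)) :=
    ⟨Nat.one_lt_pow (Nat.succ_ne_zero _) (Fact.out : p.Prime).one_lt⟩
  refine ⟨Pi.single (b.height i) (Finsupp.single ⟨i, rfl⟩ 1), ?_⟩
  rw [modelHom_apply, Finset.sum_eq_single (b.height i) (fun j _ hj => by simp [hj]) (by simp)]
  simp [ZMod.val_one]

lemma modelHom_surjective (hG : ∀ x : G, p ^ N • x = 0) : Function.Surjective b.modelHom :=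
  AddMonoidHom.range_eq_top.1 <| eq_top_iff.2 <| b.closure_range_lift hG ▸
    (AddSubgroup.closure_le _).2 (Set.range_subset_iff.2 b.lift_mem_range)

lemma eq_zero_of_modelHom_eq_zero {f : CyclicModel p N b.fiber} (hf : p • f = 0)
    (h0 : b.modelHom f = 0) : f = 0 := by
  have hp := (Fact.out : p.Prime).pos
  have hdvd (j : Fin N) (i : b.fiber j) : p ^ (j : ℕ) ∣ (f j i).val :=
    ZMod.pow_dvd_val_of_smul_eq_zero hp (congrFun (congrArg DFunLike.coe (congrFun hf j)) i)
  -- Each coordinate of `f` is `p ^ j` times `c`, so `modelHom f = ∑ c • vec` in the socle.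
  set c : (Σ j, b.fiber j) → ZMod p := fun x => (((f x.1 x.2).val / p ^ (x.1 : ℕ) : ℕ) : ZMod p)
  have hsum : ∑ x ∈ Finset.univ.sigma fun j => (f j).support, c x • b.vec x.2.1 = 0 := by
    refine Subtype.ext (Eq.trans ?_ h0)
    rw [modelHom_apply, AddSubgroup.val_finsetSum, Finset.sum_sigma]
    refine Finset.sum_congr rfl fun j _ => Finset.sum_congr rfl fun i _ => ?_
    rw [Nat.cast_smul_eq_nsmul, AddSubgroup.coe_nsmul, ← b.pow_height_smul_lift, i.2, smul_smul,
      Nat.div_mul_cancel (hdvd j i)]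
  have hli := linearIndependent_iff'.1 (b.linearIndependent.comp _
    (Equiv.sigmaFiberEquiv b.height).injective) _ c hsum
  funext j
  ext i
  by_contra hne
  have hc := hli ⟨j, i⟩ (Finset.mem_sigma.2 ⟨Finset.mem_univ j, Finsupp.mem_support_iff.2 hne⟩)
  rw [ZMod.natCast_eq_zero_iff] at hc
  exact hne (ZMod.eq_zero_of_dvd_val_div hp (hdvd j i) hc)

lemma modelHom_injective : Function.Injective b.modelHom :=
  injective_of_smul_eq_zero _ CyclicModel.pow_smul_eq_zero fun _ hf h0 =>
    b.eq_zero_of_modelHom_eq_zero hf h0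

noncomputable def fiberCombination (j : Fin N) : (b.fiber j →₀ ZMod p) →ₗ[ZMod p] socle G p :=
  Finsupp.linearCombination (ZMod p) fun i : b.fiber j => b.vec i

lemma range_fiberCombination (j : Fin N) :
    LinearMap.range (b.fiberCombination j) =
      Submodule.span (ZMod p) (b.vec '' {i | b.height i = j}) := by
  rw [fiberCombination, Finsupp.range_linearCombination, Set.image_eq_range]
  rfl

lemma fiberCombination_injective (j : Fin N) : Function.Injective (b.fiberCombination j) :=
  b.linearIndependent.comp _ Subtype.val_injective

lemma disjoint_range_fiberCombination (j : Fin N) :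
    Disjoint (LinearMap.range (b.fiberCombination j)) (socleFiltration G p (j + 1)) := by
  rw [range_fiberCombination, ← b.span_eq]
  refine b.linearIndependent.disjoint_span_image (Set.disjoint_left.2 fun i hi hi' => ?_)
  simp only [Set.mem_ofPred_eq] at hi hi'
  omega

lemma socleFiltration_eq_sup (j : Fin N) : socleFiltration G p j =
    LinearMap.range (b.fiberCombination j) ⊔ socleFiltration G p (j + 1) := by
  rw [range_fiberCombination, ← b.span_eq, ← b.span_eq, ← Submodule.span_union, ← Set.image_union]
  congr 2
  ext i
  simp only [Set.mem_ofPred_eq, Set.mem_union, Fin.ext_iff]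
  omega

noncomputable def ulmQuotHom (j : Fin N) : (b.fiber j →₀ ZMod p) →+ UlmQuot G p j :=
  (QuotientAddGroup.mk' _).comp <|
    ((socle G p).subtype.comp (b.fiberCombination j).toAddMonoidHom).codRestrict (Psub G p j)
      fun l => mem_socleFiltration.1 <| (b.socleFiltration_eq_sup j).symm ▸
        Submodule.mem_sup_left (LinearMap.mem_range_self _ l)

lemma ulmQuotHom_bijective (j : Fin N) : Function.Bijective (b.ulmQuotHom j) := by
  refine ⟨(injective_iff_map_eq_zero _).2 fun l hl => ?_, fun q => ?_⟩
  · rw [ulmQuotHom, AddMonoidHom.comp_apply, QuotientAddGroup.mk'_apply,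
      QuotientAddGroup.eq_zero_iff] at hl
    have hmem : b.fiberCombination j l ∈ socleFiltration G p (j + 1) := hl
    have := (b.disjoint_range_fiberCombination j).le_bot ⟨LinearMap.mem_range_self _ l, hmem⟩
    exact b.fiberCombination_injective j (this.trans (map_zero _).symm)
  · obtain ⟨⟨x, hx⟩, rfl⟩ := QuotientAddGroup.mk'_surjective _ q
    have hxW : (⟨x, hx.2⟩ : socle G p) ∈ socleFiltration G p j := hx
    rw [b.socleFiltration_eq_sup j, Submodule.mem_sup] at hxW
    obtain ⟨_, ⟨l, rfl⟩, z, hz, hlz⟩ := hxW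
    refine ⟨l, ?_⟩
    rw [ulmQuotHom, AddMonoidHom.comp_apply, QuotientAddGroup.mk'_apply,
      QuotientAddGroup.mk'_apply, QuotientAddGroup.eq, AddSubgroup.mem_addSubgroupOf]
    have hsum : (b.fiberCombination j l : G) + z = x := congrArg Subtype.val hlz
    change -(b.fiberCombination j l : G) + x ∈ Psub G p (j + 1)
    rw [← hsum, neg_add_cancel_left]
    exact hz

noncomputable def ulmQuotEquiv (j : Fin N) : UlmQuot G p j ≃+ (b.fiber j →₀ ZMod p) :=
  (AddEquiv.ofBijective _ (b.ulmQuotHom_bijective j)).symm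

noncomputable def modelEquiv (hG : ∀ x : G, p ^ N • x = 0) : G ≃+ CyclicModel p N b.fiber :=
  (AddEquiv.ofBijective b.modelHom ⟨b.modelHom_injective, b.modelHom_surjective hG⟩).symm

end PBasis

theorem exists_pBasis [Fact p.Prime] (hG : ∀ x : G, p ^ N • x = 0) :
    ∃ ι : Type u, Nonempty (PBasis G p N ι) := by
  obtain ⟨s, h, hs, hspan⟩ := exists_linearIndepOn_span_eq_of_antitone N (socleFiltration G p)
    socleFiltration_antitone (socleFiltration_eq_bot hG)
  have hmem (x : s) : (x : socle G p) ∈ socleFiltration G p (h x) :=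
    hspan (h x) ▸ Submodule.subset_span ⟨x.2, le_rfl⟩
  have hlt (x : s) : h x < N := by
    by_contra hN
    have := socleFiltration_antitone (not_lt.1 hN) (hmem x)
    rw [socleFiltration_eq_bot hG, Submodule.mem_bot] at this
    exact hs.linearIndependent.ne_zero x this
  choose g hg using fun x : s => (hmem x).1
  refine ⟨s, ⟨⟨fun x => ⟨h x, hlt x⟩, g, Subtype.val, hg, hs.linearIndependent, fun t => ?_⟩⟩⟩
  rw [← hspan t]
  exact Submodule.span_mono fun x ⟨hx, ht⟩ => ⟨⟨x, hx⟩, ht, rfl⟩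

theorem exists_addEquiv_cyclicModel [Fact p.Prime]
    (hG : ∀ x : G, p ^ N • x = 0) :
    ∃ B : Fin N → Type u, (∀ j : Fin N, Nonempty (UlmQuot G p j ≃+ (B j →₀ ZMod p))) ∧
      Nonempty (G ≃+ CyclicModel p N B) :=
  let ⟨_, ⟨b⟩⟩ := exists_pBasis hG
  ⟨b.fiber, fun j => ⟨b.ulmQuotEquiv j⟩, ⟨b.modelEquiv hG⟩⟩

end PBasis

lemma nonempty_equiv_of_countable_infinite {X Y : Type*} [Countable X] [Infinite X]
    [Countable Y] [Infinite Y] : Nonempty (X ≃ Y) := by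
  obtain ⟨_⟩ := nonempty_denumerable_iff.2 ⟨‹Countable X›, ‹Infinite X›⟩
  obtain ⟨_⟩ := nonempty_denumerable_iff.2 ⟨‹Countable Y›, ‹Infinite Y›⟩
  exact ⟨(Denumerable.eqv X).trans (Denumerable.eqv Y).symm⟩

section IndexTypes

variable {p : ℕ} [Fact p.Prime] {A : Type*} [AddCommGroup A] {X Y : Type u}

lemma single_one_injective : Function.Injective fun x : X => Finsupp.single x (1 : ZMod p) :=
  Finsupp.single_left_injective one_ne_zero

lemma isEmpty_of_addEquiv_finsupp [Subsingleton A] (e : A ≃+ (X →₀ ZMod p)) : IsEmpty X :=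
  ⟨fun x => Finsupp.single_ne_zero.2 (one_ne_zero (α := ZMod p))
    (e.symm.injective (Subsingleton.elim (e.symm (Finsupp.single x 1)) (e.symm 0)))⟩

lemma finite_of_addEquiv_finsupp [Finite A] (e : A ≃+ (X →₀ ZMod p)) : Finite X :=
  have : Finite (X →₀ ZMod p) := .of_equiv _ e.toEquiv
  .of_injective _ (single_one_injective (p := p))

lemma countable_of_addEquiv_finsupp [Countable A] (e : A ≃+ (X →₀ ZMod p)) : Countable X :=
  have : Countable (X →₀ ZMod p) := e.symm.injective.countable
  (single_one_injective (p := p)).countable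

lemma infinite_of_addEquiv_finsupp [Infinite A] (e : A ≃+ (X →₀ ZMod p)) : Infinite X := by
  by_contra h
  have := not_infinite_iff_finite.1 h
  have : Finite (X →₀ ZMod p) := .of_equiv _ Finsupp.equivFunOnFinite.symm
  have : Finite A := .of_equiv _ e.symm.toEquiv
  exact not_finite A

lemma nonempty_equiv_of_addEquiv_finsupp (e : (X →₀ ZMod p) ≃+ (Y →₀ ZMod p)) :
    Nonempty (X ≃ Y) := by
  have := (LinearEquiv.ofBijective (e.toAddMonoidHom.toZModLinearMap p) e.bijective).rank_eq
  simpa [rank_finsupp_self, Cardinal.eq] using this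

end IndexTypes

section Ulm

variable {p N : ℕ}

theorem nonempty_addEquiv_of_ulmQuot {G H : Type u} [AddCommGroup G] [AddCommGroup H]
    [Countable G] [Countable H] [Fact p.Prime] (hG : ∀ x : G, p ^ N • x = 0)
    (hH : ∀ x : H, p ^ N • x = 0)
    (h : ∀ j < N, Nonempty (UlmQuot G p j ≃+ UlmQuot H p j) ∨
      Infinite (UlmQuot G p j) ∧ Infinite (UlmQuot H p j)) :
    Nonempty (G ≃+ H) := by
  obtain ⟨BG, hBG, ⟨eG⟩⟩ := exists_addEquiv_cyclicModel hG
  obtain ⟨BH, hBH, ⟨eH⟩⟩ := exists_addEquiv_cyclicModel hH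
  have hB (j : Fin N) : Nonempty (BG j ≃ BH j) := by
    obtain ⟨uG⟩ := hBG j
    obtain ⟨uH⟩ := hBH j
    rcases h j j.2 with ⟨⟨e⟩⟩ | ⟨_, _⟩
    · exact nonempty_equiv_of_addEquiv_finsupp (uG.symm.trans (e.trans uH))
    · have := countable_of_addEquiv_finsupp uG
      have := countable_of_addEquiv_finsupp uH
      have := infinite_of_addEquiv_finsupp uG
      have := infinite_of_addEquiv_finsupp uH
      exact nonempty_equiv_of_countable_infinite
  exact ⟨eG.trans ((CyclicModel.congr fun j => (hB j).some).trans eH.symm)⟩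

theorem CyclicModel.exists_addEquiv_pi_prod {B : Fin N → Type u} (k : Fin N)
    (hfin : ∀ j ≠ k, Finite (B j)) (hlt : ∀ j < k, IsEmpty (B j)) (e : B k ≃ ℕ) :
    ∃ (s : ℕ) (d : Fin s → ℕ), (∀ i, (k : ℕ) < d i ∧ d i < N) ∧
      Nonempty (CyclicModel p N B ≃+
        ((∀ i : Fin s, ZMod (p ^ (d i + 1))) × (ℕ →₀ ZMod (p ^ ((k : ℕ) + 1))))) := by
  classical
  have (j : {j // j ≠ k}) : Fintype (B j) := have := hfin j j.2; Fintype.ofFinite _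
  let σ := Fintype.equivFin (Σ j : {j // j ≠ k}, B j)
  have hk (x : Σ j : {j // j ≠ k}, B j) : (k : ℕ) < x.1.1 :=
    lt_of_le_of_ne (not_lt.1 fun h => (hlt _ h).false x.2) (Fin.val_ne_of_ne x.1.2.symm)
  refine ⟨_, fun i => (σ.symm i).1.1, fun i => ⟨hk _, (σ.symm i).1.1.2⟩, ⟨?_⟩⟩
  exact (AddEquiv.mk' (Equiv.piSplitAt k _) fun _ _ => rfl).trans <|
    ((Finsupp.domCongr e).prodCongr
      ((AddEquiv.piCongrRight fun j => Finsupp.addEquivFunOnFinite).trans <|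
        (AddEquiv.mk' (Equiv.piCurry fun (j : {j // j ≠ k}) (_ : B j) =>
          ZMod (p ^ ((j : ℕ) + 1))).symm fun _ _ => rfl).trans
          (AddEquiv.mk' (Equiv.piCongrLeft'
            (fun x : Σ j : {j // j ≠ k}, B j => ZMod (p ^ ((x.1 : ℕ) + 1))) σ)
            fun _ _ => rfl))).trans AddEquiv.prodComm

lemma nonempty_psub_addEquiv {G H : Type*} [AddCommGroup G] [AddCommGroup H] {t j : ℕ}
    (e : smulSub G (p ^ t) ≃+ smulSub H (p ^ t)) (hj : t ≤ j) :
    Nonempty (Psub G p j ≃+ Psub H p j) := by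
  obtain ⟨i, rfl⟩ := Nat.exists_eq_add_of_le hj
  exact ⟨(psubShift G p t i).symm.trans ((e.psubCongr p i).trans (psubShift H p t i))⟩

lemma nonempty_ulmQuot_addEquiv {G H : Type*} [AddCommGroup G] [AddCommGroup H] {t j : ℕ}
    (e : smulSub G (p ^ t) ≃+ smulSub H (p ^ t)) (hj : t ≤ j) :
    Nonempty (UlmQuot G p j ≃+ UlmQuot H p j) := by
  obtain ⟨i, rfl⟩ := Nat.exists_eq_add_of_le hj
  exact ⟨(ulmQuotShift G p t i).symm.trans ((e.ulmQuotCongr p i).trans (ulmQuotShift H p t i))⟩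

lemma pow_smul_single_injective (hp : 1 < p) (k r : ℕ) :
    Function.Injective fun i : Fin r => p ^ k • Pi.single i (1 : ZMod (p ^ (k + 1))) := by
  intro a b hab
  by_contra hne
  have := congrFun hab a
  simp only [Pi.smul_apply, Pi.single_eq_same, Pi.single_eq_of_ne hne, smul_zero, nsmul_eq_mul,
    mul_one] at this
  rw [ZMod.natCast_eq_zero_iff, Nat.pow_dvd_pow_iff_le_right hp] at this
  omega

lemma infinite_Psub_of_forall_addSubgroup {G : Type*} [AddCommGroup G] (hp : 1 < p) {k : ℕ}
    (h : ∀ r : ℕ, ∃ H : AddSubgroup G, Nonempty (H ≃+ (Fin r → ZMod (p ^ (k + 1))))) :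
    Infinite (Psub G p k) := by
  by_contra hfin
  have := not_infinite_iff_finite.1 hfin
  obtain ⟨H, ⟨φ⟩⟩ := h (Nat.card (Psub G p k) + 1)
  have hmem (i : Fin (Nat.card (Psub G p k) + 1)) :
      (φ.symm (p ^ k • Pi.single i 1) : G) ∈ Psub G p k := by
    refine ⟨⟨φ.symm (Pi.single i 1), by rw [map_nsmul]; rfl⟩, ?_⟩
    show p • (φ.symm (p ^ k • Pi.single i 1) : G) = 0
    have hkill : p ^ (k + 1) • (Pi.single i 1 : Fin _ → ZMod (p ^ (k + 1))) = 0 := by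
      ext
      simp
    rw [← AddSubgroup.coe_nsmul, ← map_nsmul, smul_smul, ← pow_succ', hkill, map_zero,
      AddSubgroup.coe_zero]
  have := Nat.card_le_card_of_injective (fun i => (⟨_, hmem i⟩ : Psub G p k)) fun a b hab =>
    pow_smul_single_injective hp k _ (φ.symm.injective (Subtype.ext (Subtype.mk.inj hab)))
  simp at this

end Ulm

theorem exists_addEquiv_pi_prod_of_ulm {p N k : ℕ} [Fact p.Prime] (hk : k < N) {C : Type u}
    [AddCommGroup C] [Countable C] (hlen : ∀ x : C, p ^ N • x = 0) (hinf : UlmInf C p k)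
    (huniq : ∀ j, j < N → j ≠ k → ¬ UlmInf C p j) (hzero : ∀ m, m < k → UlmZero C p m) :
    ∃ (s : ℕ) (d : Fin s → ℕ), (∀ i, k < d i ∧ d i < N) ∧
      Nonempty (C ≃+ ((∀ i : Fin s, ZMod (p ^ (d i + 1))) × (ℕ →₀ ZMod (p ^ (k + 1))))) := by
  obtain ⟨B, hB, ⟨eC⟩⟩ := exists_addEquiv_cyclicModel hlen
  have hfin (j : Fin N) (hj : j ≠ ⟨k, hk⟩) : Finite (B j) :=
    have := not_infinite_iff_finite.1 (huniq j j.2 (Fin.val_ne_of_ne hj))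
    finite_of_addEquiv_finsupp (hB j).some
  have hlt (j : Fin N) (hj : j < ⟨k, hk⟩) : IsEmpty (B j) :=
    have := subsingleton_ulmQuot (hzero j hj)
    isEmpty_of_addEquiv_finsupp (hB j).some
  have : Infinite (UlmQuot C p k) := hinf
  have := infinite_of_addEquiv_finsupp (hB ⟨k, hk⟩).some
  have := countable_of_addEquiv_finsupp (hB ⟨k, hk⟩).some
  obtain ⟨s, d, hd, ⟨e⟩⟩ := CyclicModel.exists_addEquiv_pi_prod (p := p) ⟨k, hk⟩ hfin hlt
    (nonempty_equiv_of_countable_infinite (Y := ℕ)).some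
  exact ⟨s, d, hd, ⟨eC.trans e⟩⟩

theorem stmt12_general (p : ℕ) (hp : p.Prime) (N k : ℕ) (hk : k < N)
    (C : Type) [AddCommGroup C] [Countable C]
    (hlen : ∀ x : C, (p ^ N) • x = 0)
    (hinf : UlmInf C p k)
    (huniq : ∀ j, j < N → j ≠ k → ¬ UlmInf C p j)
    (hzero : ∀ m, m < k → UlmZero C p m) :
    (∃ (s : ℕ) (d : Fin s → ℕ), (∀ i, k < d i ∧ d i < N) ∧
      Nonempty (C ≃+
        ((∀ i : Fin s, ZMod (p ^ (d i + 1))) × (ℕ →₀ ZMod (p ^ (k + 1)))))) ∧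
    (∀ (G : Type) [AddCommGroup G] [Countable G],
      (∀ x : G, (p ^ N) • x = 0) →
      (∀ m, m < k → UlmZero G p m) →
      Nonempty ((smulSub G (p ^ (k + 1))) ≃+ (smulSub C (p ^ (k + 1)))) →
      (∀ r : ℕ, ∃ H : AddSubgroup G,
        Nonempty (H ≃+ (Fin r → ZMod (p ^ (k + 1))))) →
      Nonempty (G ≃+ C)) := by
  have : Fact p.Prime := ⟨hp⟩
  refine ⟨exists_addEquiv_pi_prod_of_ulm hk hlen hinf huniq hzero,
    fun G _ _ hlenG hzeroG ⟨e⟩ hsub => nonempty_addEquiv_of_ulmQuot hlenG hlen fun j hj => ?_⟩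
  rcases lt_trichotomy j k with hjk | rfl | hjk
  · have := subsingleton_ulmQuot (hzeroG j hjk)
    have := subsingleton_ulmQuot (hzero j hjk)
    have := uniqueOfSubsingleton (0 : UlmQuot G p j)
    have := uniqueOfSubsingleton (0 : UlmQuot C p j)
    exact .inl ⟨AddEquiv.ofUnique⟩
  · have : Finite (Psub C p (j + 1)) := finite_Psub_of_forall_finite_ulmQuot hlen
      fun i hi hiN => not_infinite_iff_finite.1 (huniq i hiN (by omega))
    have : Finite (Psub G p (j + 1)) :=
      .of_equiv _ (nonempty_psub_addEquiv e le_rfl).some.symm.toEquiv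
    have := infinite_Psub_of_forall_addSubgroup hp.one_lt hsub
    exact .inr ⟨infinite_ulmQuot, hinf⟩
  · exact .inl (nonempty_ulmQuot_addEquiv e hjk)

/-- Let `C` be a reduced Abelian `p`-group of length `N` with a unique `k < N`
such that `u_k(C) = ∞`, and with `u_m(C) = 0` for all `m < k`.  Then
`C ≅ H ⊕ (ℤ/p^(k+1))^(ω)` where `H` is a finite direct sum of cyclic groups
`ℤ/p^(i+1)` with `k < i < N`; and any countable Abelian `p`-group `G` of length
at most `N` with `u_m(G) = 0` for `m < k`, with `p^(k+1)G ≅ p^(k+1)C`, and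
containing subgroups isomorphic to `(ℤ/p^(k+1))^r` for every `r`, is
isomorphic to `C`. -/
theorem stmt12 (p : ℕ) (hp : p.Prime) (N k : ℕ) (hk : k < N)
    (C : Type) [AddCommGroup C] [Countable C]
    (hlen : ∀ x : C, (p ^ N) • x = 0)
    (hlen' : ∃ x : C, (p ^ (N - 1)) • x ≠ 0)
    (hinf : UlmInf C p k)
    (huniq : ∀ j, j < N → j ≠ k → ¬ UlmInf C p j)
    (hzero : ∀ m, m < k → UlmZero C p m) :
    (∃ (s : ℕ) (d : Fin s → ℕ), (∀ i, k < d i ∧ d i < N) ∧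
      Nonempty (C ≃+
        ((∀ i : Fin s, ZMod (p ^ (d i + 1))) × (ℕ →₀ ZMod (p ^ (k + 1)))))) ∧
    (∀ (G : Type) [AddCommGroup G] [Countable G],
      (∀ x : G, (p ^ N) • x = 0) →
      (∀ m, m < k → UlmZero G p m) →
      Nonempty ((smulSub G (p ^ (k + 1))) ≃+ (smulSub C (p ^ (k + 1)))) →
      (∀ r : ℕ, ∃ H : AddSubgroup G,
        Nonempty (H ≃+ (Fin r → ZMod (p ^ (k + 1))))) →
      Nonempty (G ≃+ C)) :=
  stmt12_general p hp N k hk C hlen hinf huniq hzero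
end

section
/- Let T be Ehrenfeucht's theory of dense linear orders without endpoints with constants c_0 < c_1 < c_2 < ⋯. Then T has exactly three countable models up to isomorphism: the prime model in which the constants are cofinal, the middle model in which the constants have a least upper bound, and the saturated model in which the constants are bounded above but have no least upper bound. -/
/-- A countable model of Ehrenfeucht's theory: a countable dense linear order
without endpoints together with a strictly increasing sequence of constants. -/
structure EModel : Type 1 where
  carrier : Type
  [linOrd : LinearOrder carrier]
  [dense : DenselyOrdered carrier]
  [noMax : NoMaxOrder carrier]
  [noMin : NoMinOrder carrier]
  [countable : Countable carrier]
  c : ℕ → carrier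
  mono : StrictMono c

attribute [instance] EModel.linOrd EModel.dense EModel.noMax EModel.noMin EModel.countable

/-- Isomorphism of models of the Ehrenfeucht theory: an order isomorphism
preserving the constants. -/
def EIso (A B : EModel) : Prop :=
  ∃ e : A.carrier ≃o B.carrier, ∀ n, e (A.c n) = B.c n

/-- The prime model: the constants are cofinal. -/
def EPrime (A : EModel) : Prop := ∀ x : A.carrier, ∃ n, x < A.c n

/-- The middle model: the constants have a least upper bound. -/
def EMiddle (A : EModel) : Prop := ∃ x : A.carrier, IsLUB (Set.range A.c) x

/-- The saturated model: the constants are bounded above but have no least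
upper bound. -/
def ESat (A : EModel) : Prop :=
  (∃ x : A.carrier, ∀ n, A.c n ≤ x) ∧ ¬ ∃ x : A.carrier, IsLUB (Set.range A.c) x

/-!
Attach to each point `x` of a model its cut type: the constants strictly below `x`, the
constants weakly below `x`, and whether `x` lies above some upper bound of the constants. The
cut type is monotone in `x`. Its fibres over the types of a constant or of the supremum are
singletons, and every other fibre is a convex set without endpoints, hence empty or, by Cantor's
theorem, isomorphic to `ℚ`. Gluing fibrewise isomorphisms shows that two models are isomorphic
iff they realize the same cut types; the only types whose realization varies are the two above
all constants, realized iff the constants are bounded, resp. have a supremum.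
-/

theorem exists_orderIso_of_fiberwise {α β T : Type*} [LinearOrder α] [LinearOrder β]
    [PartialOrder T] {f : α → T} {g : β → T} (hf : Monotone f) (hg : Monotone g)
    (e : ∀ t, f ⁻¹' {t} ≃o g ⁻¹' {t}) : ∃ φ : α ≃o β, ∀ a, g (φ a) = f a := by
  let φ : α → β := fun a => e (f a) ⟨a, rfl⟩
  have hφ : ∀ t a (ha : f a = t), (e t ⟨a, ha⟩ : β) = φ a := by rintro _ a rfl; rfl
  have hgφ : ∀ a, g (φ a) = f a := fun a => (e (f a) ⟨a, rfl⟩).2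
  have hmono : StrictMono φ := by
    intro a a' h
    rcases (hf h.le).lt_or_eq with hlt | heq
    · refine lt_of_not_ge fun h' => hlt.not_ge ?_
      simpa only [hgφ] using hg h'
    · rw [← hφ _ a' heq.symm]
      exact (e (f a)).strictMono (show (⟨a, rfl⟩ : f ⁻¹' {f a}) < ⟨a', heq.symm⟩ from h)
  have hsurj : Function.Surjective φ := by
    intro b
    let a := (e (g b)).symm ⟨b, rfl⟩
    refine ⟨a, ?_⟩
    rw [← hφ (g b) a a.2]
    simp [a]
  exact ⟨StrictMono.orderIsoOfSurjective φ hmono hsurj, hgφ⟩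

theorem nonempty_orderIso_of_subsingleton {α β : Type*} [Preorder α] [Preorder β]
    [Subsingleton α] [Subsingleton β] (h : Nonempty α ↔ Nonempty β) : Nonempty (α ≃o β) := by
  by_cases hα : Nonempty α
  · obtain ⟨a⟩ := hα
    obtain ⟨b⟩ := h.1 ⟨a⟩
    have := uniqueOfSubsingleton a
    have := uniqueOfSubsingleton b
    exact ⟨OrderIso.ofUnique α β⟩
  · have := not_nonempty_iff.1 hα
    have := not_nonempty_iff.1 (h.not.1 hα)
    exact ⟨OrderIso.ofIsEmpty α β⟩

namespace EModel

variable (A : EModel)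

open Set

def cutType (x : A.carrier) : Set ℕ × Set ℕ × Prop :=
  ({n | A.c n < x}, {n | A.c n ≤ x}, ∃ u ∈ upperBounds (range A.c), u < x)

/-- The cut types of a constant and of the supremum of the constants. -/
def IsPointType (t : Set ℕ × Set ℕ × Prop) : Prop :=
  (∃ n ∈ t.2.1, n ∉ t.1) ∨ (t.1 = univ ∧ ¬ t.2.2)

def gap (k : ℕ) : Set A.carrier := {x | (∀ m < k, A.c m < x) ∧ x < A.c k}

variable {A}

lemma monotone_cutType : Monotone A.cutType := by
  intro x y hxy
  refine ⟨fun n hn => lt_of_lt_of_le hn hxy, fun n hn => le_trans hn hxy, ?_⟩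
  rintro ⟨u, hu, hux⟩
  exact ⟨u, hu, hux.trans_le hxy⟩

lemma c_lt_of_mem_upperBounds {x : A.carrier} (hx : x ∈ upperBounds (range A.c)) (n : ℕ) :
    A.c n < x :=
  (A.mono n.lt_succ_self).trans_le (hx ⟨n + 1, rfl⟩)

lemma mem_upperBounds_or_eq_c_or_mem_gap (x : A.carrier) :
    x ∈ upperBounds (range A.c) ∨ (∃ k, x = A.c k) ∨ ∃ k, x ∈ A.gap k := by
  by_cases h : ∃ n, x ≤ A.c n
  · have hmin : ∀ m < Nat.find h, A.c m < x := fun m hm => not_le.1 (Nat.find_min h hm)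
    rcases (Nat.find_spec h).eq_or_lt with heq | hlt
    · exact Or.inr (Or.inl ⟨_, heq⟩)
    · exact Or.inr (Or.inr ⟨_, hmin, hlt⟩)
  · push Not at h
    exact Or.inl (forall_mem_range.2 fun n => (h n).le)

lemma cutType_c (k : ℕ) : A.cutType (A.c k) = (Iio k, Iic k, False) := by
  refine Prod.ext (ext fun n => A.mono.lt_iff_lt) (Prod.ext (ext fun n => A.mono.le_iff_le) ?_)
  exact eq_false fun ⟨u, hu, huk⟩ => (hu ⟨k, rfl⟩).not_gt huk

lemma isPointType_cutType_c (k : ℕ) : IsPointType (A.cutType (A.c k)) :=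
  Or.inl ⟨k, le_rfl, lt_irrefl _⟩

lemma cutType_of_mem_gap {k : ℕ} {x : A.carrier} (hx : x ∈ A.gap k) :
    A.cutType x = (Iio k, Iio k, False) := by
  have hge : ∀ n, k ≤ n → x < A.c n := fun n hn => hx.2.trans_le (A.mono.monotone hn)
  refine Prod.ext (ext fun n => ?_) (Prod.ext (ext fun n => ?_) ?_)
  · exact ⟨fun h => not_le.1 fun hn => (hge n hn).not_gt h, hx.1 n⟩
  · exact ⟨fun h => not_le.1 fun hn => (hge n hn).not_ge h, fun hn => (hx.1 n hn).le⟩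
  · exact eq_false fun ⟨u, hu, hux⟩ => (hux.trans (hge k le_rfl)).not_ge (hu ⟨k, rfl⟩)

lemma cutType_of_mem_upperBounds {x : A.carrier} (hx : x ∈ upperBounds (range A.c)) :
    A.cutType x = (univ, univ, ∃ u ∈ upperBounds (range A.c), u < x) := by
  refine Prod.ext (eq_univ_of_forall fun n => c_lt_of_mem_upperBounds hx n)
    (Prod.ext (eq_univ_of_forall fun n => hx ⟨n, rfl⟩) rfl)

lemma exists_mem_gap_lt {k : ℕ} {y : A.carrier} (hy : ∀ m < k, A.c m < y) (hyk : y ≤ A.c k) :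
    ∃ z ∈ A.gap k, z < y := by
  cases k with
  | zero =>
    obtain ⟨z, hz⟩ := exists_lt y
    exact ⟨z, ⟨fun m hm => absurd hm m.not_lt_zero, hz.trans_le hyk⟩, hz⟩
  | succ j =>
    obtain ⟨z, hjz, hzy⟩ := exists_between (hy j j.lt_succ_self)
    refine ⟨z, ⟨fun m hm => ?_, hzy.trans_le hyk⟩, hzy⟩
    exact (A.mono.monotone (Nat.le_of_lt_succ hm)).trans_lt hjz

lemma cutType_fst_eq_univ_iff {x : A.carrier} :
    (A.cutType x).1 = univ ↔ x ∈ upperBounds (range A.c) :=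
  ⟨fun h => forall_mem_range.2 fun n => (eq_univ_iff_forall.1 h n : A.c n < x).le,
    fun h => eq_univ_of_forall (c_lt_of_mem_upperBounds h)⟩

lemma eq_of_cutType_eq {x y : A.carrier} (h : A.cutType x = A.cutType y)
    (hx : IsPointType (A.cutType x)) : x = y := by
  rcases hx with ⟨n, hle, hlt⟩ | ⟨hub, hP⟩
  · have hy : n ∈ (A.cutType y).2.1 ∧ n ∉ (A.cutType y).1 := h ▸ ⟨hle, hlt⟩
    exact (eq_of_le_of_not_lt hle hlt).symm.trans (eq_of_le_of_not_lt hy.1 hy.2)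
  · have hyub : (A.cutType y).1 = univ ∧ ¬ (A.cutType y).2.2 := h ▸ ⟨hub, hP⟩
    rw [cutType_fst_eq_univ_iff] at hub hyub
    exact le_antisymm (not_lt.1 fun hyx => hP ⟨y, hyub.1, hyx⟩)
      (not_lt.1 fun hxy => hyub.2 ⟨x, hub, hxy⟩)

lemma cutType_eq_univ_univ_true_iff {x : A.carrier} :
    A.cutType x = (univ, univ, True) ↔ ∃ u ∈ upperBounds (range A.c), u < x := by
  refine ⟨fun h => of_eq_true (congrArg (fun t => t.2.2) h), fun hP => ?_⟩
  obtain ⟨u, hu, hux⟩ := hP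
  rw [cutType_of_mem_upperBounds fun _ hc => (hu hc).trans hux.le,
    eq_true (show ∃ u ∈ upperBounds (range A.c), u < x from ⟨u, hu, hux⟩)]

lemma cutType_eq_univ_univ_false_iff {x : A.carrier} :
    A.cutType x = (univ, univ, False) ↔ IsLUB (range A.c) x := by
  refine ⟨fun h => ?_, fun h => ?_⟩
  · have hub := cutType_fst_eq_univ_iff.1 (congrArg Prod.fst h)
    have hP := of_eq_false (congrArg (fun t => t.2.2) h)
    exact ⟨hub, fun u hu => not_lt.1 fun hux => hP ⟨u, hu, hux⟩⟩
  · have hP : ¬ ∃ u ∈ upperBounds (range A.c), u < x := fun ⟨u, hu, hux⟩ => (h.2 hu).not_gt hux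
    rw [cutType_of_mem_upperBounds h.1, eq_false hP]

lemma exists_upperBound_lt_of_not_isLUB {x : A.carrier} (hub : x ∈ upperBounds (range A.c))
    (hx : ¬ IsLUB (range A.c) x) : ∃ u ∈ upperBounds (range A.c), u < x := by
  by_contra hP
  exact hx ⟨hub, fun u hu => not_lt.1 fun hux => hP ⟨u, hu, hux⟩⟩

lemma isPointType_cutType_of_isLUB {x : A.carrier} (hx : IsLUB (range A.c) x) :
    IsPointType (A.cutType x) := by
  rw [cutType_eq_univ_univ_false_iff.2 hx]
  exact Or.inr ⟨rfl, not_false⟩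

lemma exists_lt_cutType_eq {x : A.carrier} (hx : ¬ IsPointType (A.cutType x)) :
    ∃ z < x, A.cutType z = A.cutType x := by
  rcases mem_upperBounds_or_eq_c_or_mem_gap x with hub | ⟨k, rfl⟩ | ⟨k, hk⟩
  · obtain ⟨u, hu, hux⟩ :=
      exists_upperBound_lt_of_not_isLUB hub (mt isPointType_cutType_of_isLUB hx)
    obtain ⟨z, huz, hzx⟩ := exists_between hux
    refine ⟨z, hzx, ?_⟩
    rw [cutType_eq_univ_univ_true_iff.2 ⟨u, hu, huz⟩,
      cutType_eq_univ_univ_true_iff.2 ⟨u, hu, hux⟩]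
  · exact absurd (isPointType_cutType_c k) hx
  · obtain ⟨z, hz, hzx⟩ := exists_mem_gap_lt hk.1 hk.2.le
    exact ⟨z, hzx, by rw [cutType_of_mem_gap hz, cutType_of_mem_gap hk]⟩

lemma exists_gt_cutType_eq {x : A.carrier} (hx : ¬ IsPointType (A.cutType x)) :
    ∃ z > x, A.cutType z = A.cutType x := by
  rcases mem_upperBounds_or_eq_c_or_mem_gap x with hub | ⟨k, rfl⟩ | ⟨k, hk⟩
  · obtain ⟨u, hu, hux⟩ :=
      exists_upperBound_lt_of_not_isLUB hub (mt isPointType_cutType_of_isLUB hx)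
    obtain ⟨z, hxz⟩ := exists_gt x
    refine ⟨z, hxz, ?_⟩
    rw [cutType_eq_univ_univ_true_iff.2 ⟨u, hu, hux.trans hxz⟩,
      cutType_eq_univ_univ_true_iff.2 ⟨u, hu, hux⟩]
  · exact absurd (isPointType_cutType_c k) hx
  · obtain ⟨z, hxz, hzk⟩ := exists_between hk.2
    have hz : z ∈ A.gap k := ⟨fun m hm => (hk.1 m hm).trans hxz, hzk⟩
    exact ⟨z, hxz, by rw [cutType_of_mem_gap hz, cutType_of_mem_gap hk]⟩

lemma not_ePrime_iff : ¬ EPrime A ↔ BddAbove (range A.c) := by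
  simp [EPrime, BddAbove, Set.Nonempty, mem_upperBounds]

lemma eSat_iff : ESat A ↔ ¬ EPrime A ∧ ¬ EMiddle A := by
  simp [ESat, EPrime, EMiddle]

lemma not_ePrime_of_eMiddle (h : EMiddle A) : ¬ EPrime A :=
  not_ePrime_iff.2 (h.imp fun _ hs => hs.1)

lemma univ_univ_true_mem_range_cutType_iff :
    (univ, univ, True) ∈ range A.cutType ↔ ¬ EPrime A := by
  simp only [mem_range, cutType_eq_univ_univ_true_iff, not_ePrime_iff]
  constructor
  · rintro ⟨x, u, hu, -⟩
    exact ⟨u, hu⟩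
  · rintro ⟨u, hu⟩
    obtain ⟨x, hux⟩ := exists_gt u
    exact ⟨x, u, hu, hux⟩

lemma univ_univ_false_mem_range_cutType_iff :
    (univ, univ, False) ∈ range A.cutType ↔ EMiddle A := by
  simp only [mem_range, cutType_eq_univ_univ_false_iff, EMiddle]

lemma mem_range_cutType_of_mem_range {B : EModel} (hP : EPrime A ↔ EPrime B)
    (hM : EMiddle A ↔ EMiddle B) {t : Set ℕ × Set ℕ × Prop} (ht : t ∈ range A.cutType) :
    t ∈ range B.cutType := by
  obtain ⟨x, rfl⟩ := ht
  rcases mem_upperBounds_or_eq_c_or_mem_gap x with hub | ⟨k, rfl⟩ | ⟨k, hk⟩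
  · by_cases hx : IsLUB (range A.c) x
    · rw [cutType_eq_univ_univ_false_iff.2 hx, univ_univ_false_mem_range_cutType_iff, ← hM]
      exact ⟨x, hx⟩
    · rw [cutType_eq_univ_univ_true_iff.2 (exists_upperBound_lt_of_not_isLUB hub hx),
        univ_univ_true_mem_range_cutType_iff, ← hP, not_ePrime_iff]
      exact ⟨x, hub⟩
  · exact ⟨B.c k, by rw [cutType_c, cutType_c]⟩
  · obtain ⟨z, hz, -⟩ := exists_mem_gap_lt (fun m hm => B.mono hm) le_rfl
    exact ⟨z, by rw [cutType_of_mem_gap hz, cutType_of_mem_gap hk]⟩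

lemma range_cutType_eq_iff {B : EModel} : range A.cutType = range B.cutType ↔
    (EPrime A ↔ EPrime B) ∧ (EMiddle A ↔ EMiddle B) := by
  refine ⟨fun h => ⟨?_, ?_⟩, fun ⟨hP, hM⟩ => ?_⟩
  · rw [← not_iff_not, ← univ_univ_true_mem_range_cutType_iff,
      ← univ_univ_true_mem_range_cutType_iff, h]
  · rw [← univ_univ_false_mem_range_cutType_iff, ← univ_univ_false_mem_range_cutType_iff, h]
  · exact ext fun t => ⟨mem_range_cutType_of_mem_range hP hM,
      mem_range_cutType_of_mem_range hP.symm hM.symm⟩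

lemma cutType_map {B : EModel} (e : A.carrier ≃o B.carrier) (he : ∀ n, e (A.c n) = B.c n)
    (x : A.carrier) : B.cutType (e x) = A.cutType x := by
  simp only [cutType, mem_upperBounds, forall_mem_range, ← he, e.lt_iff_lt, e.le_iff_le,
    e.surjective.exists]

lemma EIso.range_cutType_eq {B : EModel} (h : EIso A B) : range A.cutType = range B.cutType := by
  obtain ⟨e, he⟩ := h
  rw [← e.surjective.range_comp]
  exact congrArg range (funext fun x => (cutType_map e he x).symm)

lemma subsingleton_preimage_cutType {t : Set ℕ × Set ℕ × Prop} (ht : IsPointType t) :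
    (A.cutType ⁻¹' {t}).Subsingleton := fun x hx y hy =>
  eq_of_cutType_eq (hx.trans hy.symm) (by rwa [hx])

lemma noMinOrder_preimage_cutType {t : Set ℕ × Set ℕ × Prop} (ht : ¬ IsPointType t) :
    NoMinOrder (A.cutType ⁻¹' {t}) := by
  refine ⟨fun ⟨x, hx⟩ => ?_⟩
  obtain ⟨z, hzx, hz⟩ := exists_lt_cutType_eq (show ¬ IsPointType (A.cutType x) by rwa [hx])
  exact ⟨⟨z, hz.trans hx⟩, hzx⟩

lemma noMaxOrder_preimage_cutType {t : Set ℕ × Set ℕ × Prop} (ht : ¬ IsPointType t) :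
    NoMaxOrder (A.cutType ⁻¹' {t}) := by
  refine ⟨fun ⟨x, hx⟩ => ?_⟩
  obtain ⟨z, hxz, hz⟩ := exists_gt_cutType_eq (show ¬ IsPointType (A.cutType x) by rwa [hx])
  exact ⟨⟨z, hz.trans hx⟩, hxz⟩

lemma nonempty_orderIso_preimage_cutType {B : EModel} (h : range A.cutType = range B.cutType)
    (t : Set ℕ × Set ℕ × Prop) : Nonempty (A.cutType ⁻¹' {t} ≃o B.cutType ⁻¹' {t}) := by
  have hne : Nonempty (A.cutType ⁻¹' {t}) ↔ Nonempty (B.cutType ⁻¹' {t}) := by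
    simp only [nonempty_coe_sort, preimage_singleton_nonempty, h]
  by_cases ht : IsPointType t
  · have := (subsingleton_preimage_cutType (A := A) ht).coe_sort
    have := (subsingleton_preimage_cutType (A := B) ht).coe_sort
    exact nonempty_orderIso_of_subsingleton hne
  by_cases hA : Nonempty (A.cutType ⁻¹' {t})
  · have := hne.1 hA
    have := noMinOrder_preimage_cutType (A := A) ht
    have := noMaxOrder_preimage_cutType (A := A) ht
    have := noMinOrder_preimage_cutType (A := B) ht
    have := noMaxOrder_preimage_cutType (A := B) ht
    have : (A.cutType ⁻¹' {t}).OrdConnected := ordConnected_singleton.preimage_mono monotone_cutType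
    have : (B.cutType ⁻¹' {t}).OrdConnected := ordConnected_singleton.preimage_mono monotone_cutType
    exact Order.iso_of_countable_dense _ _
  · have := not_nonempty_iff.1 hA
    have := not_nonempty_iff.1 (hne.not.1 hA)
    exact nonempty_orderIso_of_subsingleton hne

lemma eIso_of_range_cutType_eq {B : EModel} (h : range A.cutType = range B.cutType) :
    EIso A B := by
  obtain ⟨φ, hφ⟩ := exists_orderIso_of_fiberwise monotone_cutType monotone_cutType
    fun t => (nonempty_orderIso_preimage_cutType h t).some
  refine ⟨φ, fun n => eq_of_cutType_eq ?_ ?_⟩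
  · rw [hφ, cutType_c, cutType_c]
  · rw [hφ]
    exact isPointType_cutType_c n

lemma eIso_iff_range_cutType_eq {B : EModel} : EIso A B ↔ range A.cutType = range B.cutType :=
  ⟨EIso.range_cutType_eq, eIso_of_range_cutType_eq⟩

end EModel

abbrev primeModel : EModel where
  carrier := ℚ
  c n := n
  mono := Nat.strictMono_cast

lemma ePrime_primeModel : EPrime primeModel := fun x => exists_nat_gt x

abbrev middleModel : EModel where
  carrier := ℚ
  c n := -(1 / (n + 1))
  mono _ _ h := neg_lt_neg (Nat.one_div_lt_one_div h)

lemma eMiddle_middleModel : EMiddle middleModel := by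
  refine ⟨(0 : ℚ), Set.forall_mem_range.2 fun n => ?_, fun y hy => ?_⟩
  · exact neg_nonpos.2 (by positivity)
  · by_contra! hy0
    obtain ⟨n, hn⟩ := exists_nat_one_div_lt (neg_pos.2 hy0)
    have hny : -(1 / ((n : ℚ) + 1)) ≤ y := hy ⟨n, rfl⟩
    linarith

abbrev satModel : EModel where
  carrier := ℚ ⊕ₗ ℚ
  countable := inferInstanceAs (Countable (ℚ ⊕ ℚ))
  c n := toLex (Sum.inl n)
  mono _ _ h := Sum.Lex.inl_lt_inl_iff.2 (Nat.strictMono_cast h)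

lemma eSat_satModel : ESat satModel := by
  refine EModel.eSat_iff.2 ⟨EModel.not_ePrime_iff.2 ⟨toLex (Sum.inr 0), ?_⟩, ?_⟩
  · exact Set.forall_mem_range.2 fun n => Sum.Lex.inl_le_inr _ _
  · rintro ⟨x, hub, hleast⟩
    rcases x with q | q
    · obtain ⟨n, hqn⟩ := exists_nat_gt q
      exact hqn.not_ge (Sum.Lex.inl_le_inl_iff.1 (hub ⟨n, rfl⟩))
    · have hq : toLex (Sum.inr (q - 1)) ∈ upperBounds (Set.range satModel.c) :=
        Set.forall_mem_range.2 fun n => Sum.Lex.inl_le_inr _ _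
      exact (sub_one_lt q).not_ge (Sum.Lex.inr_le_inr_iff.1 (hleast hq))

/-- Ehrenfeucht's theory has exactly three countable models up to isomorphism:
the prime model, the middle model and the saturated model. -/
theorem stmt13 :
    (∀ A : EModel, EPrime A ∨ EMiddle A ∨ ESat A) ∧
    (∃ A : EModel, EPrime A) ∧ (∃ A : EModel, EMiddle A) ∧ (∃ A : EModel, ESat A) ∧
    (∀ A B : EModel, EIso A B ↔
      ((EPrime A ∧ EPrime B) ∨ (EMiddle A ∧ EMiddle B) ∨ (ESat A ∧ ESat B))) := by
  refine ⟨fun A => ?_, ⟨_, ePrime_primeModel⟩, ⟨_, eMiddle_middleModel⟩, ⟨_, eSat_satModel⟩,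
    fun A B => ?_⟩
  · rw [EModel.eSat_iff]
    tauto
  · rw [EModel.eIso_iff_range_cutType_eq, EModel.range_cutType_eq_iff, EModel.eSat_iff,
      EModel.eSat_iff]
    have := A.not_ePrime_of_eMiddle
    have := B.not_ePrime_of_eMiddle
    tauto
end
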